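/- arXiv:math/0507092 — 6 statements merged into one kernel-verified Lean document; each statement's English description precedes it below -/
import Mathlib

section
/- The Moyal star product is associative: (F ⋆ G) ⋆ H = F ⋆ (G ⋆ H) for all polynomials F, G, H. -/
open MvPolynomial

noncomputable section

variable {K : Type*} [Field K] [CharZero K] {n : ℕ}

abbrev Idx (n : ℕ) := Sum (Fin n) (Fin n)

-- general helper lemmas

lemma pderiv_rename_finset {σ τ : Type*} [DecidableEq σ] [DecidableEq τ]
    (f : σ → τ) (j : τ) (s : Finset σ) (hs : ∀ i, i ∈ s ↔ f i = j)
    (φ : MvPolynomial σ K) :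
    pderiv j (rename f φ) = ∑ i ∈ s, rename f (pderiv i φ) := by
  induction φ using MvPolynomial.induction_on with
  | C a => simp
  | add p q hp hq => simp [hp, hq, Finset.sum_add_distrib]
  | mul_X p i hp =>
      have hXi : ∀ i' : σ, pderiv i' (X i : MvPolynomial σ K) = if i' = i then 1 else 0 := by
        intro i'
        by_cases h : i' = i
        · subst h; simp [pderiv_X_self]
        · simp [pderiv_X_of_ne (Ne.symm h), h]
      have hXfi : pderiv j (X (f i) : MvPolynomial τ K) = if i ∈ s then 1 else 0 := by
        by_cases h : f i = j
        · subst h; simp [pderiv_X_self, (hs i).mpr rfl]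
        · rw [pderiv_X_of_ne h, if_neg (fun hmem => h ((hs i).mp hmem))]
      simp only [map_mul, rename_X, pderiv_mul, hp, hXfi, hXi, mul_ite, mul_one, mul_zero,
        map_add, apply_ite (rename f), map_zero]
      rw [Finset.sum_add_distrib, Finset.sum_mul,
        Finset.sum_ite_eq' s i (fun _ => rename f p)]

lemma pderiv_comm' {σ : Type*} [DecidableEq σ] (i j : σ) (φ : MvPolynomial σ K) :
    pderiv i (pderiv j φ) = pderiv j (pderiv i φ) := by
  conv_lhs => rw [as_sum φ]
  conv_rhs => rw [as_sum φ]
  rw [map_sum, map_sum, map_sum, map_sum]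
  refine Finset.sum_congr rfl fun m _ => ?_
  by_cases h : i = j
  · subst h; rfl
  · simp only [pderiv_monomial]
    congr 1
    · rw [tsub_tsub, tsub_tsub, add_comm]
    · rw [Finsupp.tsub_apply, Finsupp.tsub_apply, Finsupp.single_apply, Finsupp.single_apply,
        if_neg h, if_neg (Ne.symm h)]
      simp only [Nat.sub_zero]
      ring

lemma totalDegree_pderiv_le_sub {σ : Type*} [DecidableEq σ] (i : σ) (φ : MvPolynomial σ K)
    (d : ℕ) (h : φ.totalDegree ≤ d + 1) : (pderiv i φ).totalDegree ≤ d := by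
  conv_lhs => rw [as_sum φ]
  rw [map_sum]
  apply totalDegree_finsetSum_le
  intro m hm
  rw [pderiv_monomial]
  by_cases hmi : m i = 0
  · simp [hmi]
  · by_cases hc : coeff m φ * (m i : K) = 0
    · simp [hc]
    · rw [totalDegree_monomial _ hc]
      have hle : Finsupp.single i 1 ≤ m := by
        rw [Finsupp.single_le_iff]; omega
      have hsum : (m - Finsupp.single i 1).sum (fun _ e => e) + 1 = m.sum (fun _ e => e) := by
        have := tsub_add_cancel_of_le hle
        calc (m - Finsupp.single i 1).sum (fun _ e => e) + 1
            = (m - Finsupp.single i 1).sum (fun _ e => e)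
              + (Finsupp.single i 1).sum (fun _ e => e) := by
              rw [Finsupp.sum_single_index]; rfl
          _ = ((m - Finsupp.single i 1) + Finsupp.single i 1).sum (fun _ e => e) := by
              rw [Finsupp.sum_add_index' (fun _ => rfl) (fun _ _ _ => rfl)]
          _ = m.sum (fun _ e => e) := by rw [this]
      have hmd : m.sum (fun _ e => e) ≤ d + 1 :=
        le_trans (le_totalDegree hm) h
      omega

lemma pderiv_eq_zero_of_totalDegree_eq_zero {σ : Type*} (i : σ) (φ : MvPolynomial σ K)
    (h : φ.totalDegree = 0) : pderiv i φ = 0 := by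
  apply pderiv_eq_zero_of_notMem_vars
  intro hi
  rw [mem_vars] at hi
  obtain ⟨m, hm, him⟩ := hi
  rw [totalDegree_eq_zero_iff] at h
  exact absurd (h m hm i) (Finsupp.mem_support_iff.mp him)


set_option linter.unusedSectionVars false

-- ## The three-copy ring

local notation "S" => MvPolynomial (Idx n) K
local notation "S3" => MvPolynomial (Fin 3 × Idx n) K

/-- embedding of the `a`-th copy -/
def iota (a : Fin 3) : MvPolynomial (Idx n) K →ₐ[K] MvPolynomial (Fin 3 × Idx n) K :=
  rename (fun v => (a, v))

/-- merge all copies -/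
def merge3 : MvPolynomial (Fin 3 × Idx n) K →ₐ[K] MvPolynomial (Idx n) K :=
  aeval (fun x => X x.2)

/-- collapse copy `b` onto copy `a` -/
def col (a b : Fin 3) : MvPolynomial (Fin 3 × Idx n) K →ₐ[K] MvPolynomial (Fin 3 × Idx n) K :=
  rename (fun x => (if x.1 = b then a else x.1, x.2))

lemma merge3_iota (a : Fin 3) (F : S) : merge3 (iota a F) = F := by
  show (aeval fun x => X x.2) ((rename fun v => (a, v)) F) = F
  rw [aeval_rename]
  exact aeval_X_left_apply F

lemma col_iota (a b c : Fin 3) (F : S) :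
    col a b (iota c F) = iota (if c = b then a else c) F := by
  rw [col, iota, iota, rename_rename]
  rfl

lemma merge3_col (a b : Fin 3) (x : S3) : merge3 (col a b x) = merge3 x := by
  rw [col, merge3, aeval_rename]
  rfl

lemma pderiv_iota (a : Fin 3) (u : Idx n) (F : S) :
    pderiv (a, u) (iota a F) = iota a (pderiv u F) :=
  pderiv_rename (fun _ _ h => by simpa using h) u F

lemma pderiv_iota_ne (a c : Fin 3) (hac : a ≠ c) (u : Idx n) (F : S) :
    pderiv (a, u) (iota c F) = 0 := by
  show pderiv (a, u) ((rename fun v => ((c : Fin 3), v)) F) = 0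
  rw [pderiv_rename_finset (fun v => ((c : Fin 3), v)) ((a : Fin 3), u) ∅
      (fun i => by simp [Prod.ext_iff, (Ne.symm hac)]) F, Finset.sum_empty]

-- ## Operators

/-- partial derivative as an endomorphism -/
def Dop (i : Fin 3 × Idx n) : Module.End K (MvPolynomial (Fin 3 × Idx n) K) :=
  (pderiv i).toLinearMap

@[simp] lemma Dop_apply (i : Fin 3 × Idx n) (x : S3) : Dop i x = pderiv i x := rfl

def LId (t : Fin n × Bool) : Idx n := if t.2 then Sum.inl t.1 else Sum.inr t.1
def RId (t : Fin n × Bool) : Idx n := if t.2 then Sum.inr t.1 else Sum.inl t.1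
def sg (t : Fin n × Bool) : K := if t.2 then 1 else -1

/-- the operator `℘_{ab}` -/
def Pop (a b : Fin 3) : Module.End K (MvPolynomial (Fin 3 × Idx n) K) :=
  ∑ t : Fin n × Bool, (sg (K := K) t) • (Dop (b, RId t) * Dop (a, LId t))

lemma Dop_comm (i j : Fin 3 × Idx n) :
    (Dop (K := K) (n := n) i) * Dop j = Dop j * Dop i := by
  apply LinearMap.ext
  intro x
  show pderiv i (pderiv j x) = pderiv j (pderiv i x)
  exact pderiv_comm' i j x

lemma Dop_commute (i j : Fin 3 × Idx n) :
    Commute (Dop (K := K) (n := n) i) (Dop j) := Dop_comm i j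

set_option maxHeartbeats 1000000 in
lemma Pop_comm (a b c d : Fin 3) :
    Commute (Pop (K := K) (n := n) a b) (Pop c d) := by
  apply Commute.sum_left
  intro t _
  apply Commute.sum_right
  intro s _
  apply Commute.smul_left
  apply Commute.smul_right
  exact ((Dop_commute _ _).mul_left (Dop_commute _ _)).mul_right
    ((Dop_commute _ _).mul_left (Dop_commute _ _))

-- truncated exponential
def Ex (A : Module.End K (MvPolynomial (Fin 3 × Idx n) K)) (N : ℕ) (x : S3) : S3 :=
  ∑ k ∈ Finset.range N, ((Nat.factorial k : K)⁻¹) • ((A ^ k) x)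

-- ## Degree bookkeeping

/-- drops total degree by at least 2 -/
def DD (A : Module.End K (MvPolynomial (Fin 3 × Idx n) K)) : Prop :=
  ∀ (x : MvPolynomial (Fin 3 × Idx n) K) (d : ℕ),
    x.totalDegree ≤ d + 2 → (A x).totalDegree ≤ d

/-- kills polynomials of degree at most 1 -/
def SK (A : Module.End K (MvPolynomial (Fin 3 × Idx n) K)) : Prop :=
  ∀ x : MvPolynomial (Fin 3 × Idx n) K, x.totalDegree ≤ 1 → A x = 0

lemma DD.add {A B} (hA : DD (K := K) (n := n) A) (hB : DD B) : DD (A + B) := by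
  intro x d h
  rw [LinearMap.add_apply]
  exact (totalDegree_add _ _).trans (max_le (hA x d h) (hB x d h))

lemma SK.add {A B} (hA : SK (K := K) (n := n) A) (hB : SK B) : SK (A + B) := by
  intro x h
  rw [LinearMap.add_apply, hA x h, hB x h, add_zero]

lemma DD.smul {A} (c : K) (hA : DD (K := K) (n := n) A) : DD (c • A) := by
  intro x d h
  rw [LinearMap.smul_apply]
  exact (totalDegree_smul_le _ _).trans (hA x d h)

lemma SK.smul {A} (c : K) (hA : SK (K := K) (n := n) A) : SK (c • A) := by
  intro x h
  rw [LinearMap.smul_apply, hA x h, smul_zero]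

lemma DD_pop (a b : Fin 3) : DD (Pop (K := K) (n := n) a b) := by
  intro x d h
  rw [Pop, LinearMap.sum_apply]
  apply totalDegree_finsetSum_le
  intro t _
  rw [LinearMap.smul_apply]
  refine (totalDegree_smul_le _ _).trans ?_
  rw [Module.End.mul_apply, Dop_apply, Dop_apply]
  exact totalDegree_pderiv_le_sub _ _ d
    (totalDegree_pderiv_le_sub _ _ (d + 1) (by omega))

lemma SK_pop (a b : Fin 3) : SK (Pop (K := K) (n := n) a b) := by
  intro x h
  rw [Pop, LinearMap.sum_apply]
  apply Finset.sum_eq_zero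
  intro t _
  rw [LinearMap.smul_apply, Module.End.mul_apply, Dop_apply, Dop_apply,
    pderiv_eq_zero_of_totalDegree_eq_zero _ _
      (Nat.le_zero.mp (totalDegree_pderiv_le_sub _ _ 0 h)), smul_zero]

lemma DD.pow_deg {A} (hA : DD (K := K) (n := n) A) :
    ∀ (k : ℕ) (x : MvPolynomial (Fin 3 × Idx n) K) (d : ℕ),
      x.totalDegree ≤ d + 2 * k → ((A ^ k) x).totalDegree ≤ d := by
  intro k
  induction k with
  | zero => intro x d h; simpa using h
  | succ k ih =>
      intro x d h
      rw [pow_succ', Module.End.mul_apply]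
      exact hA _ d (ih x (d + 2) (by omega))

lemma DD.pow_zero {A} (hA : DD (K := K) (n := n) A) (hS : SK A)
    (k : ℕ) (x : MvPolynomial (Fin 3 × Idx n) K) (h : x.totalDegree + 1 ≤ 2 * k) :
    (A ^ k) x = 0 := by
  cases k with
  | zero => omega
  | succ k =>
      rw [pow_succ', Module.End.mul_apply]
      exact hS _ (hA.pow_deg k x 1 (by omega))

lemma mixed_zero {A B} (hA : DD (K := K) (n := n) A) (hSA : SK A)
    (hB : DD B) (hSB : SK B) (i j : ℕ) (x : MvPolynomial (Fin 3 × Idx n) K)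
    (h : x.totalDegree + 1 ≤ 2 * (i + j)) : (A ^ i) ((B ^ j) x) = 0 := by
  by_cases hj : x.totalDegree + 1 ≤ 2 * j
  · rw [hB.pow_zero hSB j x hj, map_zero]
  · have h2j : 2 * j ≤ x.totalDegree := by omega
    have hd : ((B ^ j) x).totalDegree ≤ x.totalDegree - 2 * j :=
      hB.pow_deg j x (x.totalDegree - 2 * j) (by omega)
    exact hA.pow_zero hSA i _ (by omega)

-- ## Exponential lemmas

lemma Ex_intertwine {A B : Module.End K (MvPolynomial (Fin 3 × Idx n) K)}
    (L : MvPolynomial (Fin 3 × Idx n) K →ₗ[K] MvPolynomial (Fin 3 × Idx n) K)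
    (hL : ∀ y, A (L y) = L (B y)) (N : ℕ) (x : MvPolynomial (Fin 3 × Idx n) K) :
    Ex A N (L x) = L (Ex B N x) := by
  have hpow : ∀ (k : ℕ) (y), (A ^ k) (L y) = L ((B ^ k) y) := by
    intro k
    induction k with
    | zero => intro y; simp
    | succ k ih =>
        intro y
        rw [pow_succ, pow_succ, Module.End.mul_apply, Module.End.mul_apply, hL, ih]
  simp only [Ex, hpow, map_sum, map_smul]

lemma Ex_mul_right {A : Module.End K (MvPolynomial (Fin 3 × Idx n) K)}
    (c : MvPolynomial (Fin 3 × Idx n) K)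
    (hA : ∀ y, A (y * c) = A y * c) (N : ℕ) (x : MvPolynomial (Fin 3 × Idx n) K) :
    Ex A N (x * c) = Ex A N x * c := by
  have hpow : ∀ (k : ℕ) (y), (A ^ k) (y * c) = (A ^ k) y * c := by
    intro k
    induction k with
    | zero => intro y; simp
    | succ k ih =>
        intro y
        rw [pow_succ, Module.End.mul_apply, Module.End.mul_apply, hA, ih]
  simp only [Ex, hpow, Finset.sum_mul, smul_mul_assoc]

lemma triangle_sum {M : Type*} [AddCommMonoid M] (N : ℕ) (f : ℕ → ℕ → M)
    (hf : ∀ i j, N ≤ i + j → f i j = 0) :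
    (∑ k ∈ Finset.range N, ∑ m ∈ Finset.range (k + 1), f m (k - m)) =
      ∑ i ∈ Finset.range N, ∑ j ∈ Finset.range N, f i j := by
  have hR : (∑ i ∈ Finset.range N, ∑ j ∈ Finset.range N, f i j) =
      ∑ p ∈ (Finset.range N ×ˢ Finset.range N).filter fun p => p.1 + p.2 < N,
        f p.1 p.2 := by
    rw [← Finset.sum_product']
    symm
    apply Finset.sum_subset (Finset.filter_subset _ _)
    intro p _ hp
    simp only [Finset.mem_filter, Finset.mem_product, Finset.mem_range, not_and, not_lt] at hp ⊢
    rcases Finset.mem_product.mp ‹p ∈ _› with ⟨h1, h2⟩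
    exact hf p.1 p.2 (hp ⟨Finset.mem_range.mp h1, Finset.mem_range.mp h2⟩)
  rw [hR, Finset.sum_sigma']
  apply Finset.sum_nbij' (i := fun p => (p.2, p.1 - p.2)) (j := fun q => ⟨q.1 + q.2, q.1⟩)
  · intro a ha
    simp only [Finset.mem_sigma, Finset.mem_range] at ha
    simp only [Finset.mem_filter, Finset.mem_product, Finset.mem_range]
    omega
  · intro b hb
    simp only [Finset.mem_filter, Finset.mem_product, Finset.mem_range] at hb
    simp only [Finset.mem_sigma, Finset.mem_range]
    omega
  · intro a ha
    simp only [Finset.mem_sigma, Finset.mem_range] at ha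
    ext
    · simp; omega
    · simp
  · intro b hb
    simp only [Finset.mem_filter, Finset.mem_product, Finset.mem_range] at hb
    ext <;> simp <;> omega
  · intro a ha
    rfl

lemma Ex_add {A B : Module.End K (MvPolynomial (Fin 3 × Idx n) K)}
    (hc : Commute A B) (N : ℕ) (x : MvPolynomial (Fin 3 × Idx n) K)
    (hv : ∀ i j, N ≤ i + j → (A ^ i) ((B ^ j) x) = 0) :
    Ex (A + B) N x = Ex A N (Ex B N x) := by
  have coeff_eq : ∀ m k : ℕ, m ≤ k →
      ((Nat.factorial k : K)⁻¹ * (k.choose m : K)) =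
        (Nat.factorial m : K)⁻¹ * (Nat.factorial (k - m) : K)⁻¹ := by
    intro m k hm
    have h := Nat.choose_mul_factorial_mul_factorial hm
    have hK : (k.choose m : K) * (Nat.factorial m : K) * (Nat.factorial (k - m) : K)
        = (Nat.factorial k : K) := by exact_mod_cast congrArg (Nat.cast (R := K)) h
    have h1 : (Nat.factorial k : K) ≠ 0 := Nat.cast_ne_zero.mpr (Nat.factorial_ne_zero k)
    have h2 : (Nat.factorial m : K) ≠ 0 := Nat.cast_ne_zero.mpr (Nat.factorial_ne_zero m)
    have h3 : (Nat.factorial (k - m) : K) ≠ 0 :=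
      Nat.cast_ne_zero.mpr (Nat.factorial_ne_zero (k - m))
    field_simp
    linear_combination hK
  have RHS : Ex A N (Ex B N x) =
      ∑ i ∈ Finset.range N, ∑ j ∈ Finset.range N,
        ((Nat.factorial i : K)⁻¹ * (Nat.factorial j : K)⁻¹) • (A ^ i) ((B ^ j) x) := by
    rw [Ex]
    refine Finset.sum_congr rfl fun i _ => ?_
    rw [Ex, map_sum, Finset.smul_sum]
    refine Finset.sum_congr rfl fun j _ => ?_
    rw [map_smul, smul_smul]
  rw [RHS, ← triangle_sum N _ (fun i j hij => by rw [hv i j hij, smul_zero])]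
  rw [Ex]
  refine Finset.sum_congr rfl fun k _ => ?_
  rw [hc.add_pow k, LinearMap.sum_apply, Finset.smul_sum]
  refine Finset.sum_congr rfl fun m hm => ?_
  have hmk : m ≤ k := by
    simpa using Nat.lt_succ_iff.mp (Finset.mem_range.mp hm)
  rw [Module.End.mul_apply, Module.End.mul_apply, Module.End.natCast_apply,
    map_nsmul, map_nsmul, ← Nat.cast_smul_eq_nsmul K, smul_smul, coeff_eq m k hmk]

-- ## Original definitions

def pV (n : ℕ) (K : Type*) [Field K] (i : Fin n) : MvPolynomial (Idx n) K := X (Sum.inl i)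

def qV (n : ℕ) (K : Type*) [Field K] (i : Fin n) : MvPolynomial (Idx n) K := X (Sum.inr i)

def derivsL {k : ℕ} (v : Fin k → Fin n × Bool) (F : MvPolynomial (Idx n) K) :
    MvPolynomial (Idx n) K :=
  (List.finRange k).foldl
    (fun F j => pderiv (if (v j).2 then Sum.inl (v j).1 else Sum.inr (v j).1) F) F

def derivsR {k : ℕ} (v : Fin k → Fin n × Bool) (G : MvPolynomial (Idx n) K) :
    MvPolynomial (Idx n) K :=
  (List.finRange k).foldl
    (fun G j => pderiv (if (v j).2 then Sum.inr (v j).1 else Sum.inl (v j).1) G) G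

def moyalC (k : ℕ) (F G : MvPolynomial (Idx n) K) : MvPolynomial (Idx n) K :=
  ((2 ^ k * Nat.factorial k : ℕ) : K)⁻¹ •
    ∑ v : Fin k → Fin n × Bool,
      (∏ j : Fin k, if (v j).2 then (1 : K) else -1) • (derivsL v F * derivsR v G)

def mstar (F G : MvPolynomial (Idx n) K) : MvPolynomial (Idx n) K :=
  ∑ k ∈ Finset.range (F.totalDegree + 1), moyalC k F G

def poisson (F G : MvPolynomial (Idx n) K) : MvPolynomial (Idx n) K :=
  ∑ i : Fin n,
    (pderiv (Sum.inl i) F * pderiv (Sum.inr i) G -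
      pderiv (Sum.inr i) F * pderiv (Sum.inl i) G)

def Str (F : MvPolynomial (Idx n) K) : K := eval (fun _ => 0) F

-- ## derivs lemmas

lemma derivsL_eq_foldl {k : ℕ} (v : Fin k → Fin n × Bool) (F : MvPolynomial (Idx n) K) :
    derivsL v F = (List.finRange k).foldl (fun F j => pderiv (LId (v j)) F) F := rfl

lemma derivsR_eq_foldl {k : ℕ} (v : Fin k → Fin n × Bool) (G : MvPolynomial (Idx n) K) :
    derivsR v G = (List.finRange k).foldl (fun G j => pderiv (RId (v j)) G) G := rfl

lemma derivsL_cons {k : ℕ} (t : Fin n × Bool) (v : Fin k → Fin n × Bool)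
    (F : MvPolynomial (Idx n) K) :
    derivsL (Fin.cons t v) F = derivsL v (pderiv (LId t) F) := by
  rw [derivsL_eq_foldl, derivsL_eq_foldl, List.finRange_succ, List.foldl_cons, List.foldl_map]
  simp [Fin.cons_succ, Fin.cons_zero, LId]

lemma derivsR_cons {k : ℕ} (t : Fin n × Bool) (v : Fin k → Fin n × Bool)
    (G : MvPolynomial (Idx n) K) :
    derivsR (Fin.cons t v) G = derivsR v (pderiv (RId t) G) := by
  rw [derivsR_eq_foldl, derivsR_eq_foldl, List.finRange_succ, List.foldl_cons, List.foldl_map]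
  simp [Fin.cons_succ, Fin.cons_zero, RId]

lemma foldl_pderiv_deg_le {I : Type*} (e : I → Idx n) :
    ∀ (l : List I) (F : MvPolynomial (Idx n) K),
      (l.foldl (fun F j => pderiv (e j) F) F).totalDegree ≤ F.totalDegree := by
  intro l
  induction l with
  | nil => intro F; exact le_rfl
  | cons i l ih =>
      intro F
      rw [List.foldl_cons]
      exact le_trans (ih _)
        (totalDegree_pderiv_le_sub _ _ F.totalDegree (by omega))

lemma foldl_pderiv_zero {I : Type*} (e : I → Idx n) :
    ∀ (l : List I) (F : MvPolynomial (Idx n) K), F.totalDegree < l.length →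
      l.foldl (fun F j => pderiv (e j) F) F = 0 := by
  intro l
  induction l with
  | nil => intro F h; simp at h
  | cons i l ih =>
      intro F h
      rw [List.foldl_cons]
      by_cases h0 : F.totalDegree = 0
      · rw [pderiv_eq_zero_of_totalDegree_eq_zero _ _ h0]
        clear h ih h0
        induction l with
        | nil => rfl
        | cons j l ih2 =>
            rw [List.foldl_cons, map_zero]
            exact ih2
      · apply ih
        have := totalDegree_pderiv_le_sub (e i) F (F.totalDegree - 1) (by omega)
        simp only [List.length_cons] at h
        omega

lemma derivsL_zero {k : ℕ} (v : Fin k → Fin n × Bool) (F : MvPolynomial (Idx n) K)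
    (h : F.totalDegree < k) : derivsL v F = 0 := by
  rw [derivsL_eq_foldl]
  exact foldl_pderiv_zero _ _ _ (by simpa using h)

lemma derivsL_deg_le {k : ℕ} (v : Fin k → Fin n × Bool) (F : MvPolynomial (Idx n) K) :
    (derivsL v F).totalDegree ≤ F.totalDegree := by
  rw [derivsL_eq_foldl]; exact foldl_pderiv_deg_le _ _ _

lemma derivsR_deg_le {k : ℕ} (v : Fin k → Fin n × Bool) (G : MvPolynomial (Idx n) K) :
    (derivsR v G).totalDegree ≤ G.totalDegree := by
  rw [derivsR_eq_foldl]; exact foldl_pderiv_deg_le _ _ _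

lemma moyalC_eq_zero {k : ℕ} (F G : MvPolynomial (Idx n) K) (h : F.totalDegree < k) :
    moyalC k F G = 0 := by
  rw [moyalC]
  rw [Finset.sum_eq_zero, smul_zero]
  intro v _
  rw [derivsL_zero v F h, zero_mul, smul_zero]

lemma moyalC_deg_le (k : ℕ) (F G : MvPolynomial (Idx n) K) :
    (moyalC k F G).totalDegree ≤ F.totalDegree + G.totalDegree := by
  rw [moyalC]
  refine (totalDegree_smul_le _ _).trans (totalDegree_finsetSum_le fun v _ => ?_)
  refine (totalDegree_smul_le _ _).trans ?_
  exact (totalDegree_mul _ _).trans (add_le_add (derivsL_deg_le v F) (derivsR_deg_le v G))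

lemma mstar_deg_le (F G : MvPolynomial (Idx n) K) :
    (mstar F G).totalDegree ≤ F.totalDegree + G.totalDegree :=
  totalDegree_finsetSum_le fun k _ => moyalC_deg_le k F G

-- ## Key structural formula

lemma Pop_tensor (a b : Fin 3) (hab : a ≠ b) (F G : MvPolynomial (Idx n) K) :
    Pop a b (iota a F * iota b G) =
      ∑ t : Fin n × Bool,
        sg (K := K) t • (iota a (pderiv (LId t) F) * iota b (pderiv (RId t) G)) := by
  rw [Pop, LinearMap.sum_apply]
  refine Finset.sum_congr rfl fun t _ => ?_
  rw [LinearMap.smul_apply, Module.End.mul_apply, Dop_apply, Dop_apply]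
  congr 1
  rw [pderiv_mul, pderiv_iota, pderiv_iota_ne a b hab, mul_zero, add_zero,
    pderiv_mul, pderiv_iota, pderiv_iota_ne b a (Ne.symm hab), zero_mul, zero_add]

lemma Pop_pow_tensor (a b : Fin 3) (hab : a ≠ b) (k : ℕ) (F G : MvPolynomial (Idx n) K) :
    ((Pop a b) ^ k) (iota a F * iota b G) =
      ∑ v : Fin k → Fin n × Bool,
        (∏ j : Fin k, sg (K := K) (v j)) •
          (iota a (derivsL v F) * iota b (derivsR v G)) := by
  induction k generalizing F G with
  | zero => simp [derivsL, derivsR]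
  | succ k ih =>
      rw [pow_succ, Module.End.mul_apply, Pop_tensor a b hab, map_sum]
      have e1 : (∑ v : Fin (k + 1) → Fin n × Bool,
          (∏ j : Fin (k + 1), sg (K := K) (v j)) •
            (iota a (derivsL v F) * iota b (derivsR v G))) =
          ∑ t : Fin n × Bool, ∑ w : Fin k → Fin n × Bool,
            (∏ j : Fin (k + 1), sg (K := K) ((Fin.cons t w :
                Fin (k + 1) → Fin n × Bool) j)) •
              (iota a (derivsL (Fin.cons t w) F) *
                iota b (derivsR (Fin.cons t w) G)) :=
        ((Fintype.sum_equiv (Fin.consEquiv (fun _ : Fin (k + 1) => (Fin n × Bool)))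
          (fun p : (Fin n × Bool) × (Fin k → Fin n × Bool) =>
            (∏ j : Fin (k + 1), sg (K := K) ((Fin.cons p.1 p.2 :
                Fin (k + 1) → Fin n × Bool) j)) •
              (iota a (derivsL (Fin.cons p.1 p.2) F) *
                iota b (derivsR (Fin.cons p.1 p.2) G)))
          (fun v : Fin (k + 1) → Fin n × Bool =>
            (∏ j : Fin (k + 1), sg (K := K) (v j)) •
              (iota a (derivsL v F) * iota b (derivsR v G)))
          (fun p => rfl)).symm).trans
        (Fintype.sum_prod_type
          (fun p : (Fin n × Bool) × (Fin k → Fin n × Bool) =>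
            (∏ j : Fin (k + 1), sg (K := K) ((Fin.cons p.1 p.2 :
                Fin (k + 1) → Fin n × Bool) j)) •
              (iota a (derivsL (Fin.cons p.1 p.2) F) *
                iota b (derivsR (Fin.cons p.1 p.2) G))))
      rw [e1]
      refine Finset.sum_congr rfl fun t _ => ?_
      rw [map_smul, ih, Finset.smul_sum]
      refine Finset.sum_congr rfl fun v _ => ?_
      rw [derivsL_cons, derivsR_cons, Fin.prod_univ_succ]
      simp only [Fin.cons_zero, Fin.cons_succ, smul_smul]

-- ## mstar via the exponential

lemma chi_Ex {T : Type*} [CommRing T] [Algebra K T]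
    (χ : MvPolynomial (Fin 3 × Idx n) K →ₐ[K] T) (ρ : MvPolynomial (Idx n) K →ₐ[K] T)
    (a b : Fin 3) (hab : a ≠ b)
    (ha : ∀ x, χ (iota a x) = ρ x) (hb : ∀ x, χ (iota b x) = ρ x)
    (F G : MvPolynomial (Idx n) K) (N : ℕ) (hN : F.totalDegree + 1 ≤ N) :
    χ (Ex ((2 : K)⁻¹ • Pop a b) N (iota a F * iota b G)) = ρ (mstar F G) := by
  have hsum : ∀ k : ℕ,
      χ (((((2 : K)⁻¹ • Pop a b)) ^ k) (iota a F * iota b G)) =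
        ((2 : K)⁻¹) ^ k • ρ (∑ v : Fin k → Fin n × Bool,
          (∏ j : Fin k, if (v j).2 then (1 : K) else -1) • (derivsL v F * derivsR v G)) := by
    intro k
    rw [smul_pow, LinearMap.smul_apply, map_smul, Pop_pow_tensor a b hab k F G,
      map_sum, map_sum]
    congr 1
    refine Finset.sum_congr rfl fun v _ => ?_
    rw [map_smul, map_smul, map_mul, ha, hb, ← map_mul]
    simp [sg]
  have hmoyal : ∀ k : ℕ,
      (Nat.factorial k : K)⁻¹ • ((2 : K)⁻¹) ^ k • ρ (∑ v : Fin k → Fin n × Bool,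
          (∏ j : Fin k, if (v j).2 then (1 : K) else -1) • (derivsL v F * derivsR v G)) =
        ρ (moyalC k F G) := by
    intro k
    rw [moyalC, map_smul, smul_smul]
    congr 1
    push_cast
    rw [mul_inv, inv_pow]
    ring
  rw [Ex, map_sum]
  simp only [map_smul, hsum, hmoyal]
  rw [← map_sum, mstar]
  congr 1
  symm
  apply Finset.sum_subset (Finset.range_subset_range.mpr hN)
  intro k hk hk'
  exact moyalC_eq_zero F G (by simp only [Finset.mem_range] at hk hk'; omega)

-- ## collapse intertwining

lemma pderiv_col_merged (a b : Fin 3) (hab : a ≠ b) (u : Idx n)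
    (x : MvPolynomial (Fin 3 × Idx n) K) :
    pderiv (a, u) (col a b x) = col a b (pderiv (a, u) x + pderiv (b, u) x) := by
  show pderiv (a, u) ((rename fun y : Fin 3 × Idx n => (if y.1 = b then a else y.1, y.2)) x) = _
  rw [pderiv_rename_finset _ _ ({(a, u), (b, u)} : Finset (Fin 3 × Idx n)) ?hmem x]
  case hmem =>
    rintro ⟨t, v⟩
    simp only [Finset.mem_insert, Finset.mem_singleton, Prod.mk.injEq]
    by_cases hv : v = u
    · subst hv
      simp only [and_true]
      by_cases htb : t = b
      · subst htb; simp [hab]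
      · simp [htb]
    · simp [hv]
  rw [Finset.sum_insert (by simp [Prod.ext_iff, hab]), Finset.sum_singleton, ← map_add]
  rfl

lemma pderiv_col_spectator (a b c : Fin 3) (hca : c ≠ a) (hcb : c ≠ b) (u : Idx n)
    (x : MvPolynomial (Fin 3 × Idx n) K) :
    pderiv (c, u) (col a b x) = col a b (pderiv (c, u) x) := by
  show pderiv (c, u) ((rename fun y : Fin 3 × Idx n => (if y.1 = b then a else y.1, y.2)) x) = _
  rw [pderiv_rename_finset _ _ ({(c, u)} : Finset (Fin 3 × Idx n)) ?hmem x]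
  case hmem =>
    rintro ⟨t, v⟩
    simp only [Finset.mem_singleton, Prod.mk.injEq]
    by_cases hv : v = u
    · subst hv
      simp only [and_true]
      by_cases htb : t = b
      · subst htb; simp [Ne.symm hca, Ne.symm hcb]
      · simp [htb]
    · simp [hv]
  rw [Finset.sum_singleton]
  rfl

lemma Pop_col_left (y : MvPolynomial (Fin 3 × Idx n) K) :
    Pop (K := K) 0 2 (col 0 1 y) =
      col 0 1 ((Pop (K := K) (n := n) 0 2 + Pop (K := K) (n := n) 1 2) y) := by
  rw [LinearMap.add_apply, map_add]
  unfold Pop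
  rw [LinearMap.sum_apply, LinearMap.sum_apply, LinearMap.sum_apply,
    map_sum, map_sum, ← Finset.sum_add_distrib]
  refine Finset.sum_congr rfl fun t _ => ?_
  simp only [LinearMap.smul_apply, Module.End.mul_apply, Dop_apply, map_smul]
  rw [pderiv_col_merged 0 1 (by decide) (LId t) y,
    pderiv_col_spectator 0 1 2 (by decide) (by decide) (RId t),
    map_add (pderiv ((2 : Fin 3), RId t)), map_add (col 0 1), smul_add]

lemma Pop_col_right (y : MvPolynomial (Fin 3 × Idx n) K) :
    Pop (K := K) 0 1 (col 1 2 y) =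
      col 1 2 ((Pop (K := K) (n := n) 0 1 + Pop (K := K) (n := n) 0 2) y) := by
  rw [LinearMap.add_apply, map_add]
  unfold Pop
  rw [LinearMap.sum_apply, LinearMap.sum_apply, LinearMap.sum_apply,
    map_sum, map_sum, ← Finset.sum_add_distrib]
  refine Finset.sum_congr rfl fun t _ => ?_
  simp only [LinearMap.smul_apply, Module.End.mul_apply, Dop_apply, map_smul]
  rw [pderiv_col_spectator 1 2 0 (by decide) (by decide) (LId t) y,
    pderiv_col_merged 1 2 (by decide) (RId t), map_add (col 1 2), smul_add]

lemma Pop_mul_iota (a b c : Fin 3) (hca : c ≠ a) (hcb : c ≠ b)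
    (Hc : MvPolynomial (Idx n) K) (y : MvPolynomial (Fin 3 × Idx n) K) :
    Pop a b (y * iota c Hc) = Pop a b y * iota c Hc := by
  rw [Pop, LinearMap.sum_apply, LinearMap.sum_apply, Finset.sum_mul]
  refine Finset.sum_congr rfl fun t _ => ?_
  rw [LinearMap.smul_apply, LinearMap.smul_apply, Module.End.mul_apply, Module.End.mul_apply,
    Dop_apply, Dop_apply, Dop_apply, Dop_apply, smul_mul_assoc]
  congr 1
  rw [pderiv_mul, pderiv_iota_ne a c (Ne.symm hca), mul_zero, add_zero,
    pderiv_mul, pderiv_iota_ne b c (Ne.symm hcb), mul_zero, add_zero]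

-- ## Assembly

set_option maxHeartbeats 2000000 in
/-- The Moyal star product is associative. -/
theorem stmt5 (F G H : MvPolynomial (Idx n) K) :
    mstar (mstar F G) H = mstar F (mstar G H) := by
  classical
  set N : ℕ := F.totalDegree + G.totalDegree + H.totalDegree + 1 with hNdef
  set A01 : Module.End K (MvPolynomial (Fin 3 × Idx n) K) := (2 : K)⁻¹ • Pop 0 1 with hA01
  set A02 : Module.End K (MvPolynomial (Fin 3 × Idx n) K) := (2 : K)⁻¹ • Pop 0 2 with hA02
  set A12 : Module.End K (MvPolynomial (Fin 3 × Idx n) K) := (2 : K)⁻¹ • Pop 1 2 with hA12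
  set Φ : MvPolynomial (Fin 3 × Idx n) K := iota 0 F * iota 1 G * iota 2 H with hΦ
  have iota_deg : ∀ (a : Fin 3) (X : MvPolynomial (Idx n) K),
      (iota a X).totalDegree ≤ X.totalDegree := fun a X => totalDegree_rename_le _ X
  have hΦdeg : Φ.totalDegree + 1 ≤ N := by
    have h1 := totalDegree_mul (iota (K := K) 0 F * iota 1 G) (iota 2 H)
    have h2 := totalDegree_mul (iota (K := K) 0 F) (iota 1 G)
    rw [← hΦ] at h1
    have := iota_deg 0 F; have := iota_deg 1 G; have := iota_deg 2 H
    omega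
  have hDD01 : DD A01 := DD.smul _ (DD_pop 0 1)
  have hDD02 : DD A02 := DD.smul _ (DD_pop 0 2)
  have hDD12 : DD A12 := DD.smul _ (DD_pop 1 2)
  have hSK01 : SK A01 := SK.smul _ (SK_pop 0 1)
  have hSK02 : SK A02 := SK.smul _ (SK_pop 0 2)
  have hSK12 : SK A12 := SK.smul _ (SK_pop 1 2)
  -- LHS
  have L1 : mstar (mstar F G) H =
      merge3 (Ex A02 N (iota 0 (mstar F G) * iota 2 H)) := by
    refine (chi_Ex merge3 (AlgHom.id K _) 0 2 (by decide)
      (fun x => merge3_iota 0 x) (fun x => merge3_iota 2 x) (mstar F G) H N ?_).symm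
    have := mstar_deg_le F G
    omega
  have L2 : iota 0 (mstar F G) = col 0 1 (Ex A01 N (iota 0 F * iota 1 G)) := by
    refine (chi_Ex (col 0 1) (iota 0) 0 1 (by decide)
      (fun x => by simpa using col_iota 0 1 0 x)
      (fun x => by simpa using col_iota 0 1 1 x) F G N ?_).symm
    omega
  have L3 : col 0 1 (Ex A01 N (iota 0 F * iota 1 G)) * iota 2 H =
      col 0 1 (Ex A01 N (iota 0 F * iota 1 G) * iota 2 H) := by
    rw [map_mul, col_iota, if_neg (by decide : ¬(2 : Fin 3) = 1)]
  have hmul01 : ∀ y, A01 (y * iota 2 H) = A01 y * iota 2 H := by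
    intro y
    rw [hA01, LinearMap.smul_apply, LinearMap.smul_apply,
      Pop_mul_iota 0 1 2 (by decide) (by decide), smul_mul_assoc]
  have L4 : Ex A01 N (iota 0 F * iota 1 G) * iota 2 H = Ex A01 N Φ :=
    (Ex_mul_right (iota 2 H) hmul01 N (iota 0 F * iota 1 G)).symm
  have hint02 : ∀ y, A02 ((col 0 1).toLinearMap y) =
      (col 0 1).toLinearMap ((A02 + A12) y) := by
    intro y
    simp only [AlgHom.toLinearMap_apply, hA02, hA12]
    rw [LinearMap.smul_apply, Pop_col_left, ← map_smul]
    congr 1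
    simp [smul_add]
  have L5 : Ex A02 N (col 0 1 (Ex A01 N Φ)) =
      col 0 1 (Ex (A02 + A12) N (Ex A01 N Φ)) :=
    Ex_intertwine (col 0 1).toLinearMap hint02 N (Ex A01 N Φ)
  have hc1 : Commute (A02 + A12) A01 :=
    Commute.add_left (((Pop_comm 0 2 0 1).smul_left _).smul_right _)
      (((Pop_comm 1 2 0 1).smul_left _).smul_right _)
  have L7 : Ex (A02 + A12) N (Ex A01 N Φ) = Ex ((A02 + A12) + A01) N Φ := by
    refine (Ex_add hc1 N Φ fun i j hij => ?_).symm
    exact mixed_zero (hDD02.add hDD12) (hSK02.add hSK12) hDD01 hSK01 i j Φ (by omega)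
  have LHS : mstar (mstar F G) H = merge3 (Ex ((A02 + A12) + A01) N Φ) := by
    rw [L1, L2, L3, L4, L5, merge3_col, L7]
  -- RHS
  have R1 : mstar F (mstar G H) =
      merge3 (Ex A01 N (iota 0 F * iota 1 (mstar G H))) := by
    refine (chi_Ex merge3 (AlgHom.id K _) 0 1 (by decide)
      (fun x => merge3_iota 0 x) (fun x => merge3_iota 1 x) F (mstar G H) N ?_).symm
    omega
  have R2 : iota 1 (mstar G H) = col 1 2 (Ex A12 N (iota 1 G * iota 2 H)) := by
    refine (chi_Ex (col 1 2) (iota 1) 1 2 (by decide)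
      (fun x => by simpa using col_iota 1 2 1 x)
      (fun x => by simpa using col_iota 1 2 2 x) G H N ?_).symm
    omega
  have R3 : iota 0 F * col 1 2 (Ex A12 N (iota 1 G * iota 2 H)) =
      col 1 2 (Ex A12 N (iota 1 G * iota 2 H) * iota 0 F) := by
    rw [map_mul, col_iota, if_neg (by decide : ¬(0 : Fin 3) = 2), mul_comm]
  have hmul12 : ∀ y, A12 (y * iota 0 F) = A12 y * iota 0 F := by
    intro y
    rw [hA12, LinearMap.smul_apply, LinearMap.smul_apply,
      Pop_mul_iota 1 2 0 (by decide) (by decide), smul_mul_assoc]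
  have R4 : Ex A12 N (iota 1 G * iota 2 H) * iota 0 F = Ex A12 N Φ := by
    rw [← Ex_mul_right (iota 0 F) hmul12 N (iota 1 G * iota 2 H)]
    congr 1
    rw [hΦ]
    ring
  have hint01 : ∀ y, A01 ((col 1 2).toLinearMap y) =
      (col 1 2).toLinearMap ((A01 + A02) y) := by
    intro y
    simp only [AlgHom.toLinearMap_apply, hA01, hA02]
    rw [LinearMap.smul_apply, Pop_col_right, ← map_smul]
    congr 1
    simp [smul_add]
  have R5 : Ex A01 N (col 1 2 (Ex A12 N Φ)) =
      col 1 2 (Ex (A01 + A02) N (Ex A12 N Φ)) :=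
    Ex_intertwine (col 1 2).toLinearMap hint01 N (Ex A12 N Φ)
  have hc2 : Commute (A01 + A02) A12 :=
    Commute.add_left (((Pop_comm 0 1 1 2).smul_left _).smul_right _)
      (((Pop_comm 0 2 1 2).smul_left _).smul_right _)
  have R7 : Ex (A01 + A02) N (Ex A12 N Φ) = Ex ((A01 + A02) + A12) N Φ := by
    refine (Ex_add hc2 N Φ fun i j hij => ?_).symm
    exact mixed_zero (hDD01.add hDD02) (hSK01.add hSK02) hDD12 hSK12 i j Φ (by omega)
  have RHS : mstar F (mstar G H) = merge3 (Ex ((A01 + A02) + A12) N Φ) := by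
    rw [R1, R2, R3, R4, R5, merge3_col, R7]
  have hop : (A02 + A12) + A01 = (A01 + A02) + A12 := by abel
  rw [LHS, RHS, hop]

end
end

section
/- The restriction of κ(F,G) = (F ⋆ G)(0) to S^ℓ × S^ℓ equals C_ℓ(F,G), and this bilinear form is non-degenerate on S^ℓ for every ℓ ≥ 0. -/
open MvPolynomial

noncomputable section

variable {K : Type*} [Field K] [CharZero K] {n : ℕ}

section AuxGeneral
variable {σ : Type*}

lemma myCoeff_pderiv (i : σ) (F : MvPolynomial σ K) (m : σ →₀ ℕ) :
    coeff m (pderiv i F) = (m i + 1 : ℕ) * coeff (m + Finsupp.single i 1) F := by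
  classical
  induction F using MvPolynomial.induction_on' with
  | add p q hp hq => simp [map_add, hp, hq, mul_add]
  | monomial s a =>
    rw [pderiv_monomial, coeff_monomial, coeff_monomial]
    by_cases h : s = m + Finsupp.single i 1
    · have h1 : s - Finsupp.single i 1 = m := by
        subst h; ext b; simp [Finsupp.tsub_apply, Finsupp.single_apply]
      have h2 : s i = m i + 1 := by subst h; simp
      simp [h1, h2, h, mul_comm]
    · have h1 : ¬ (s - Finsupp.single i 1 = m ∧ s i ≠ 0) := by
        rintro ⟨h1, h2⟩
        apply h
        ext b
        have := DFunLike.congr_fun h1 b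
        have h2' : s i ≠ 0 := h2
        simp [Finsupp.tsub_apply, Finsupp.single_apply] at this ⊢
        by_cases hb : i = b
        · subst hb; simp at this ⊢; omega
        · simp [hb] at this ⊢; omega
      by_cases hs : s i = 0
      · simp [h, hs]
      · have : ¬ (s - Finsupp.single i 1 = m) := fun hc => h1 ⟨hc, hs⟩
        simp [h, this]

lemma myIsHomog_pderiv {F : MvPolynomial σ K} {d : ℕ} (hF : F.IsHomogeneous d) (i : σ) :
    (pderiv i F).IsHomogeneous (d - 1) := by
  intro m hm
  rw [myCoeff_pderiv] at hm
  have h2 : coeff (m + Finsupp.single i 1) F ≠ 0 := by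
    intro h; simp [h] at hm
  have := hF h2
  rw [show (1 : σ → ℕ) = fun _ => 1 from rfl, ← Finsupp.degree_eq_weight_one] at this ⊢
  rw [show Finsupp.degree (m + Finsupp.single i 1) = Finsupp.degree m + 1 by
    rw [Finsupp.degree_eq_weight_one]
    simp only [map_add, ← Finsupp.degree_eq_weight_one]
    simp [Finsupp.degree_single]] at this
  omega

variable [DecidableEq σ]

/-- iterated partial derivative along a list of variables -/
def Dl (l : List σ) (F : MvPolynomial σ K) : MvPolynomial σ K :=
  l.foldl (fun F a => pderiv a F) F

@[simp] lemma Dl_nil (F : MvPolynomial σ K) : Dl [] F = F := rfl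

lemma Dl_cons (a : σ) (l : List σ) (F : MvPolynomial σ K) :
    Dl (a :: l) F = Dl l (pderiv a F) := rfl

@[simp] lemma Dl_zero (l : List σ) : Dl l (0 : MvPolynomial σ K) = 0 := by
  induction l with
  | nil => rfl
  | cons a l ih => rw [Dl_cons, map_zero, ih]

/-- exponent multiset of a list -/
def cnt (l : List σ) : σ →₀ ℕ := Multiset.toFinsupp (l : Multiset σ)

@[simp] lemma cnt_nil : cnt ([] : List σ) = 0 := by simp [cnt]

lemma cnt_cons (a : σ) (l : List σ) : cnt (a :: l) = cnt l + Finsupp.single a 1 := by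
  ext b
  simp only [cnt, Multiset.coe_count, Finsupp.coe_add, Pi.add_apply,
    Multiset.toFinsupp_apply, List.count_cons, Finsupp.single_apply]
  by_cases hb : b = a
  · subst hb; simp
  · have hb' : ¬ a = b := fun h => hb h.symm
    simp [hb, hb']

/-- combinatorial coefficient -/
def cfn : List σ → ℕ
  | [] => 1
  | a :: l => cfn l * (cnt l a + 1)

lemma cfn_pos (l : List σ) : 0 < cfn l := by
  induction l with
  | nil => exact Nat.one_pos
  | cons a l ih => exact Nat.mul_pos ih (Nat.succ_pos _)

lemma constantCoeff_Dl (l : List σ) (F : MvPolynomial σ K) :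
    constantCoeff (Dl l F) = (cfn l : K) * coeff (cnt l) F := by
  induction l generalizing F with
  | nil => simp [constantCoeff_eq, cfn]
  | cons a l ih =>
    rw [Dl_cons, ih, myCoeff_pderiv, cnt_cons, cfn]
    push_cast
    ring

lemma isHomog_Dl {F : MvPolynomial σ K} {d : ℕ} (hF : F.IsHomogeneous d) (l : List σ) :
    (Dl l F).IsHomogeneous (d - l.length) := by
  induction l generalizing F d with
  | nil => simpa using hF
  | cons a l ih =>
    rw [Dl_cons]
    have := ih (myIsHomog_pderiv hF a)
    simpa [Nat.sub_sub, Nat.add_comm 1 l.length] using this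

section CntMap
variable {τ : Type*} [DecidableEq τ]

lemma cnt_map (e : σ ≃ τ) (l : List σ) :
    cnt (l.map e) = Finsupp.equivMapDomain e (cnt l) := by
  ext b
  rw [Finsupp.equivMapDomain_apply]
  show Multiset.count b (Multiset.map e (l : Multiset σ)) = Multiset.count (e.symm b) l
  rw [show b = e (e.symm b) by simp]
  rw [Multiset.count_map_eq_count' _ _ e.injective]
  simp

lemma equivMapDomain_inj (e : σ ≃ τ) : Function.Injective
    (Finsupp.equivMapDomain (M := ℕ) e) := by
  intro x y h
  ext a
  have := DFunLike.congr_fun h (e a)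
  simpa using this

lemma degree_equivMapDomain (e : σ ≃ τ) (m : σ →₀ ℕ) :
    (Finsupp.equivMapDomain e m).degree = m.degree := by
  rw [Finsupp.degree_apply, Finsupp.degree_apply]
  rw [show (Finsupp.equivMapDomain e m).support = m.support.map e.toEmbedding from rfl,
    Finset.sum_map]
  simp [Finsupp.equivMapDomain_apply]

end CntMap

/-- count of elements satisfying p, as a function of the exponent finsupp -/
lemma countP_eq_srg (p : σ → Bool) (l : List σ) :
    l.countP p = (cnt l).sum (fun a k => if p a then k else 0) := by
  induction l with
  | nil => simp
  | cons a l ih =>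
    rw [List.countP_cons, cnt_cons, Finsupp.sum_add_index (by simp) (by intros; split <;> simp),
      Finsupp.sum_single_index (by simp), ← ih]

/-- every finsupp of degree k is the count vector of some function Fin k → σ -/
lemma exists_fn (m : σ →₀ ℕ) (k : ℕ) (hm : m.degree = k) :
    ∃ w : Fin k → σ, cnt ((List.finRange k).map w) = m := by
  classical
  set L : List σ := m.toMultiset.toList with hL
  have hcard : L.length = k := by
    rw [hL, Multiset.length_toList, Finsupp.card_toMultiset, ← hm]
    rfl
  refine ⟨fun j => L.get ⟨j.1, by omega⟩, ?_⟩
  have hlist : (List.finRange k).map (fun j : Fin k => L.get ⟨j.1, by omega⟩) = L := by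
    apply List.ext_get
    · simp [hcard]
    · intro i h1 h2
      simp
  rw [hlist]
  show Multiset.toFinsupp (L : Multiset σ) = m
  rw [hL, Multiset.coe_toList, Finsupp.toMultiset_toFinsupp]

-- countP as sum of indicators
lemma sum_ite_eq_countP {α : Type*} (p : α → Bool) (l : List α) :
    (l.map fun a => if p a then 1 else 0).sum = l.countP p := by
  induction l with
  | nil => simp
  | cons a l ih =>
    rw [List.map_cons, List.sum_cons, List.countP_cons, ih]
    by_cases h : p a <;> simp [h, Nat.add_comm]

lemma eq_C_of_isHomog_zero {P : MvPolynomial σ K} (hP : P.IsHomogeneous 0) :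
    P = MvPolynomial.C (constantCoeff P) := by
  ext m
  rw [coeff_C, constantCoeff_eq]
  by_cases hm : (0 : σ →₀ ℕ) = m
  · rw [← hm]; simp
  · rw [if_neg hm]
    exact hP.coeff_eq_zero (by
      rw [Ne, Finsupp.degree_eq_zero_iff]
      exact fun h => hm h.symm)


end AuxGeneral

section AuxSpecialized

/-- the list of left derivative directions -/
def wv {k : ℕ} (v : Fin k → Fin n × Bool) : Fin k → Idx n :=
  fun j => if (v j).2 then Sum.inl (v j).1 else Sum.inr (v j).1

def Lv {k : ℕ} (v : Fin k → Fin n × Bool) : List (Idx n) := (List.finRange k).map (wv v)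

def Rv {k : ℕ} (v : Fin k → Fin n × Bool) : List (Idx n) :=
  (List.finRange k).map (Sum.swap ∘ wv v)

lemma derivsL_eq {k : ℕ} (v : Fin k → Fin n × Bool) (F : MvPolynomial (Idx n) K) :
    derivsL v F = Dl (Lv v) F := by
  rw [derivsL, Dl, Lv, List.foldl_map]
  rfl

lemma derivsR_eq {k : ℕ} (v : Fin k → Fin n × Bool) (G : MvPolynomial (Idx n) K) :
    derivsR v G = Dl (Rv v) G := by
  rw [derivsR, Dl, Rv, List.foldl_map]
  refine congrArg (fun f => List.foldl f G _) ?_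
  funext G j
  cases h : (v j).2 <;> simp [h, wv, Sum.swap]

lemma length_Lv {k : ℕ} (v : Fin k → Fin n × Bool) : (Lv v).length = k := by
  simp [Lv]

lemma length_Rv {k : ℕ} (v : Fin k → Fin n × Bool) : (Rv v).length = k := by
  simp [Rv]

lemma Rv_eq_map {k : ℕ} (v : Fin k → Fin n × Bool) :
    Rv v = (Lv v).map (Equiv.sumComm (Fin n) (Fin n)) := by
  rw [Rv, Lv, List.map_map]
  rfl

lemma cnt_Rv {k : ℕ} (v : Fin k → Fin n × Bool) :
    cnt (Rv v) = Finsupp.equivMapDomain (Equiv.sumComm (Fin n) (Fin n)) (cnt (Lv v)) := by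
  rw [Rv_eq_map, cnt_map]

/-- number of `inr`'s, as a function of the exponent -/
def srg (m : Idx n →₀ ℕ) : ℕ := m.sum (fun a k => if a.isRight then k else 0)

lemma sign_eq {k : ℕ} (v : Fin k → Fin n × Bool) :
    (∏ j : Fin k, if (v j).2 then (1 : K) else -1) = (-1) ^ (srg (cnt (Lv v))) := by
  have h1 : (∏ j : Fin k, if (v j).2 then (1 : K) else -1)
      = ∏ j : Fin k, (-1 : K) ^ (if (wv v j).isRight then 1 else 0) := by
    apply Finset.prod_congr rfl
    intro j _
    cases h : (v j).2 <;> simp [wv, h]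
  rw [h1, Finset.prod_pow_eq_pow_sum]
  congr 1
  rw [srg, ← countP_eq_srg (fun a => a.isRight) (Lv v), Lv, List.countP_map,
    ← sum_ite_eq_countP, Fin.sum_univ_def]
  congr 1


lemma Str_eq (F : MvPolynomial (Idx n) K) : Str F = constantCoeff F := by
  rw [Str, show (fun _ : Idx n => (0 : K)) = (0 : Idx n → K) from rfl, eval_zero]

lemma cc_moyalC (k : ℕ) (F G : MvPolynomial (Idx n) K) :
    constantCoeff (moyalC k F G) =
      ((2 ^ k * Nat.factorial k : ℕ) : K)⁻¹ *
        ∑ v : Fin k → Fin n × Bool,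
          (∏ j : Fin k, if (v j).2 then (1 : K) else -1) *
            ((cfn (Lv v) : K) * coeff (cnt (Lv v)) F *
              ((cfn (Rv v) : K) * coeff (cnt (Rv v)) G)) := by
  rw [moyalC, constantCoeff_eq]
  rw [MvPolynomial.coeff_smul, smul_eq_mul]
  congr 1
  rw [coeff_sum]
  apply Finset.sum_congr rfl
  intro v _
  rw [MvPolynomial.coeff_smul, smul_eq_mul, ← constantCoeff_eq, map_mul,
    derivsL_eq, derivsR_eq, constantCoeff_Dl, constantCoeff_Dl]

lemma moyalC_zero_left (k : ℕ) (G : MvPolynomial (Idx n) K) :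
    moyalC k (0 : MvPolynomial (Idx n) K) G = 0 := by
  rw [moyalC]
  have : ∀ v : Fin k → Fin n × Bool, derivsL v (0 : MvPolynomial (Idx n) K) = 0 := by
    intro v; rw [derivsL_eq, Dl_zero]
  simp [this]

lemma moyalC_homog_zero {F G : MvPolynomial (Idx n) K} {ℓ : ℕ}
    (hF : F.IsHomogeneous ℓ) (hG : G.IsHomogeneous ℓ) :
    (moyalC ℓ F G).IsHomogeneous 0 := by
  rw [moyalC]
  rw [← mem_homogeneousSubmodule]
  apply Submodule.smul_mem
  apply Submodule.sum_mem
  intro v _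
  apply Submodule.smul_mem
  rw [mem_homogeneousSubmodule]
  have h1 : (derivsL v F).IsHomogeneous 0 := by
    rw [derivsL_eq]
    have := isHomog_Dl hF (Lv v)
    rwa [length_Lv, Nat.sub_self] at this
  have h2 : (derivsR v G).IsHomogeneous 0 := by
    rw [derivsR_eq]
    have := isHomog_Dl hG (Rv v)
    rwa [length_Rv, Nat.sub_self] at this
  simpa using h1.mul h2

lemma cc_moyalC_lt {F G : MvPolynomial (Idx n) K} {ℓ k : ℕ}
    (hF : F.IsHomogeneous ℓ) (hG : G.IsHomogeneous ℓ) (hk : k < ℓ) :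
    constantCoeff (moyalC k F G) = 0 := by
  rw [moyalC, constantCoeff_eq, MvPolynomial.coeff_smul, smul_eq_mul]
  rw [coeff_sum]
  rw [Finset.sum_eq_zero, mul_zero]
  intro v _
  rw [MvPolynomial.coeff_smul, smul_eq_mul]
  have h1 : (derivsL v F).IsHomogeneous (ℓ - k) := by
    rw [derivsL_eq]
    have := isHomog_Dl hF (Lv v)
    rwa [length_Lv] at this
  have h2 : (derivsR v G).IsHomogeneous (ℓ - k) := by
    rw [derivsR_eq]
    have := isHomog_Dl hG (Rv v)
    rwa [length_Rv] at this
  have h3 := (h1.mul h2).coeff_eq_zero (d := 0) (by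
    rw [map_zero]
    omega)
  rw [h3, mul_zero]

lemma Str_mstar {F G : MvPolynomial (Idx n) K} {ℓ : ℕ}
    (hF : F.IsHomogeneous ℓ) (hG : G.IsHomogeneous ℓ) :
    Str (mstar F G) = constantCoeff (moyalC ℓ F G) := by
  by_cases hF0 : F = 0
  · subst hF0
    rw [moyalC_zero_left, mstar]
    simp [Str_eq, moyalC_zero_left]
  · rw [Str_eq, mstar, map_sum, hF.totalDegree hF0]
    apply Finset.sum_eq_single_of_mem
    · exact Finset.self_mem_range_succ ℓ
    · intro k hk hkne
      exact cc_moyalC_lt hF hG (by simp at hk; omega)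


end AuxSpecialized

/-- On `S^ℓ × S^ℓ` the form `κ(F,G) = Str(F ⋆ G)` equals the (constant) Moyal
coefficient `C_ℓ(F,G)`, and this bilinear form is non-degenerate on `S^ℓ`. -/
theorem stmt9 (ℓ : ℕ) :
    (∀ F G : MvPolynomial (Idx n) K, F.IsHomogeneous ℓ → G.IsHomogeneous ℓ →
      moyalC ℓ F G = MvPolynomial.C (Str (mstar F G))) ∧
    (∀ F : MvPolynomial (Idx n) K, F.IsHomogeneous ℓ →
      (∀ G : MvPolynomial (Idx n) K, G.IsHomogeneous ℓ → Str (mstar F G) = 0) → F = 0) := by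
  constructor
  · intro F G hF hG
    rw [Str_mstar hF hG]
    exact eq_C_of_isHomog_zero (moyalC_homog_zero hF hG)
  · intro F hF hvan
    by_contra hF0
    obtain ⟨m₀, hm₀⟩ : ∃ m₀, m₀ ∈ F.support :=
      (Finset.nonempty_iff_ne_empty.mpr (fun h => hF0 (MvPolynomial.support_eq_empty.mp h)))
    have ha : coeff m₀ F ≠ 0 := MvPolynomial.mem_support_iff.mp hm₀
    have hdeg : m₀.degree = ℓ := by
      rw [Finsupp.degree_eq_weight_one]
      exact hF (MvPolynomial.mem_support_iff.mp hm₀)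
    set e := Equiv.sumComm (Fin n) (Fin n) with he
    set m' := Finsupp.equivMapDomain e m₀ with hm'
    set s := srg m₀ with hs
    set G : MvPolynomial (Idx n) K := monomial m' ((-1 : K) ^ s) with hG
    have hGhom : G.IsHomogeneous ℓ :=
      isHomogeneous_monomial _ (by rw [degree_equivMapDomain]; exact hdeg)
    have h0 : Str (mstar F G) = 0 := hvan G hGhom
    rw [Str_mstar hF hGhom, cc_moyalC] at h0
    set weight : (Fin ℓ → Fin n × Bool) → ℕ :=
      fun v => if m₀ = cnt (Lv v) then cfn (Lv v) * cfn (Rv v) else 0 with hweight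
    have hss : (-1 : K) ^ s * (-1) ^ s = 1 := by
      rw [← pow_add]
      exact Even.neg_one_pow ⟨s, rfl⟩
    have hsum : (∑ v : Fin ℓ → Fin n × Bool,
        (∏ j : Fin ℓ, if (v j).2 then (1 : K) else -1) *
          ((cfn (Lv v) : K) * coeff (cnt (Lv v)) F *
            ((cfn (Rv v) : K) * coeff (cnt (Rv v)) G)))
        = ((∑ v : Fin ℓ → Fin n × Bool, weight v : ℕ) : K) * coeff m₀ F := by
      rw [Nat.cast_sum, Finset.sum_mul]
      apply Finset.sum_congr rfl
      intro v _
      by_cases h : m₀ = cnt (Lv v)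
      · have hcR : cnt (Rv v) = m' := by rw [cnt_Rv, ← h, hm', he]
        have hcoefG : coeff (cnt (Rv v)) G = (-1 : K) ^ s := by
          rw [hG, coeff_monomial, if_pos hcR.symm]
        have hsgn : (∏ j : Fin ℓ, if (v j).2 then (1 : K) else -1) = (-1 : K) ^ s := by
          rw [sign_eq, ← h]
        rw [hcoefG, hsgn, ← h, hweight]
        simp only [if_pos h]
        push_cast
        linear_combination ((cfn (Lv v) : K) * (cfn (Rv v) : K) * coeff m₀ F) * hss
      · have hne : m' ≠ cnt (Rv v) := by
          intro hc
          exact h (equivMapDomain_inj e (by rw [← cnt_Rv, ← hc, hm', he]))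
        have hcoefG : coeff (cnt (Rv v)) G = 0 := by
          rw [hG, coeff_monomial, if_neg hne]
        rw [hcoefG, hweight]
        simp [if_neg h]
    rw [hsum] at h0
    -- the total weight is positive
    obtain ⟨w, hw⟩ := exists_fn m₀ ℓ hdeg
    set v₀ : Fin ℓ → Fin n × Bool :=
      fun j => Sum.elim (fun i => (i, true)) (fun i => (i, false)) (w j) with hv₀
    have hwv : wv v₀ = w := by
      funext j
      cases hj : w j <;> simp [wv, hv₀, hj]
    have hLv₀ : cnt (Lv v₀) = m₀ := by rw [Lv, hwv, hw]
    have hWpos : 0 < ∑ v : Fin ℓ → Fin n × Bool, weight v := by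
      refine lt_of_lt_of_le ?_ (Finset.single_le_sum
        (f := weight) (fun _ _ => Nat.zero_le _) (Finset.mem_univ v₀))
      rw [hweight]
      simp only [if_pos hLv₀.symm]
      exact Nat.mul_pos (cfn_pos _) (cfn_pos _)
    have hNnz : ((2 ^ ℓ * Nat.factorial ℓ : ℕ) : K) ≠ 0 := by
      rw [Nat.cast_ne_zero]
      positivity
    have hWnz : ((∑ v : Fin ℓ → Fin n × Bool, weight v : ℕ) : K) ≠ 0 := by
      rw [Nat.cast_ne_zero]
      omega
    exact (mul_ne_zero (inv_ne_zero hNnz) (mul_ne_zero hWnz ha)) h0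


end
end

section
/- For the one-variable Weyl algebra, Str(p₁^i ⋆ q₁^j) = 0 if i ≠ j, and Str(p₁^i ⋆ q₁^i) = i!/2^i, where Str is evaluation at 0. -/
open MvPolynomial

noncomputable section

variable {K : Type*} [Field K] [CharZero K] {n : ℕ}

set_option linter.unusedSectionVars false in
lemma nat_desc (i k : ℕ) : i * (i-1).descFactorial k = i.descFactorial (k+1) := by
  cases i with
  | zero => simp
  | succ m => rw [Nat.succ_descFactorial_succ]; simp

set_option linter.unusedSectionVars false in
lemma foldl_pderiv_zero_s11 (s t : Idx 1) (l : List Bool) :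
    l.foldl (fun F b => pderiv (if b then s else t) F) (0 : MvPolynomial (Idx 1) K) = 0 := by
  induction l with
  | nil => rfl
  | cons b l ih => simpa using ih

set_option linter.unusedSectionVars false in
lemma foldl_pderiv_smul (s t : Idx 1) (c : K) (l : List Bool) (F : MvPolynomial (Idx 1) K) :
    l.foldl (fun F b => pderiv (if b then s else t) F) (c • F)
      = c • l.foldl (fun F b => pderiv (if b then s else t) F) F := by
  induction l generalizing F with
  | nil => rfl
  | cons b l ih =>
    rw [List.foldl_cons, Derivation.map_smul, ih, List.foldl_cons]

set_option linter.unusedSectionVars false in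
lemma foldl_pderiv_pow (s t : Idx 1) (hst : t ≠ s) (l : List Bool) (i : ℕ) :
    l.foldl (fun F b => pderiv (if b then s else t) F) ((X s : MvPolynomial (Idx 1) K) ^ i)
      = if l.all id then (i.descFactorial l.length : K) • X s ^ (i - l.length) else 0 := by
  induction l generalizing i with
  | nil => simp
  | cons b l ih =>
    cases b with
    | false =>
      have h0 : pderiv t ((X s : MvPolynomial (Idx 1) K) ^ i) = 0 := by
        rw [pderiv_pow, pderiv_X_of_ne hst.symm, mul_zero]
      simp [List.foldl_cons, h0, foldl_pderiv_zero_s11]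
    | true =>
      have h1 : pderiv s ((X s : MvPolynomial (Idx 1) K) ^ i) = (i : K) • X s ^ (i-1) := by
        rw [pderiv_pow, pderiv_X_self, mul_one, smul_eq_C_mul, map_natCast]
      rw [List.foldl_cons, if_pos rfl, h1, foldl_pderiv_smul, ih]
      by_cases h : l.all id
      · rw [if_pos h, if_pos (by simp [h]), smul_smul, List.length_cons, ← Nat.cast_mul,
          nat_desc, Nat.sub_sub, Nat.add_comm 1 l.length]
      · rw [if_neg h, if_neg (by simp [h]), smul_zero]

lemma derivsL_pow {k : ℕ} (v : Fin k → Fin 1 × Bool) (i : ℕ) :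
    derivsL v ((pV 1 K 0) ^ i)
      = if ∀ j, (v j).2 then ((i.descFactorial k : K)) • (pV 1 K 0) ^ (i - k) else 0 := by
  unfold derivsL pV
  have hv : ∀ j, (v j).1 = 0 := fun j => Subsingleton.elim _ _
  have heq : (fun (F : MvPolynomial (Idx 1) K) j =>
        pderiv (if (v j).2 then Sum.inl (v j).1 else Sum.inr (v j).1) F)
      = fun F j => pderiv (if (v j).2 then (Sum.inl 0 : Idx 1) else Sum.inr 0) F := by
    funext F j; rw [hv j]
  rw [heq, ← List.foldl_map (f := fun j => (v j).2)
      (g := fun F b => pderiv (if b then (Sum.inl 0 : Idx 1) else Sum.inr 0) F),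
    foldl_pderiv_pow _ _ (by simp)]
  by_cases h : ∀ j, (v j).2
  · rw [if_pos, if_pos h] <;> simp [h, List.all_eq_true]
  · rw [if_neg, if_neg h]
    simp only [List.all_map, List.all_eq_true, List.mem_finRange]
    push_neg at h
    obtain ⟨j, hj⟩ := h
    exact fun hh => hj (hh _ trivial)

lemma derivsR_pow {k : ℕ} (v : Fin k → Fin 1 × Bool) (i : ℕ) :
    derivsR v ((qV 1 K 0) ^ i)
      = if ∀ j, (v j).2 then ((i.descFactorial k : K)) • (qV 1 K 0) ^ (i - k) else 0 := by
  unfold derivsR qV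
  have hv : ∀ j, (v j).1 = 0 := fun j => Subsingleton.elim _ _
  have heq : (fun (F : MvPolynomial (Idx 1) K) j =>
        pderiv (if (v j).2 then Sum.inr (v j).1 else Sum.inl (v j).1) F)
      = fun F j => pderiv (if (v j).2 then (Sum.inr 0 : Idx 1) else Sum.inl 0) F := by
    funext F j; rw [hv j]
  rw [heq, ← List.foldl_map (f := fun j => (v j).2)
      (g := fun F b => pderiv (if b then (Sum.inr 0 : Idx 1) else Sum.inl 0) F),
    foldl_pderiv_pow _ _ (by simp)]
  by_cases h : ∀ j, (v j).2
  · rw [if_pos, if_pos h] <;> simp [h, List.all_eq_true]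
  · rw [if_neg, if_neg h]
    simp only [List.all_map, List.all_eq_true, List.mem_finRange]
    push_neg at h
    obtain ⟨j, hj⟩ := h
    exact fun hh => hj (hh _ trivial)

lemma strC (i j k : ℕ) :
    Str (moyalC k ((pV 1 K 0) ^ i) ((qV 1 K 0) ^ j))
      = ((2 ^ k * k.factorial : ℕ) : K)⁻¹ * ((i.descFactorial k : K) * (j.descFactorial k : K))
        * ((if i - k = 0 then (1:K) else 0) * (if j - k = 0 then (1:K) else 0)) := by
  have key : ∑ v : Fin k → Fin 1 × Bool,
      (∏ jj : Fin k, if (v jj).2 then (1 : K) else -1) •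
        (derivsL v ((pV 1 K 0)^i) * derivsR v ((qV 1 K 0)^j))
      = ((i.descFactorial k : K) • (pV 1 K 0)^(i-k)) *
        ((j.descFactorial k : K) • (qV 1 K 0)^(j-k)) := by
    rw [Fintype.sum_eq_single (fun _ => ((0 : Fin 1), true))]
    · simp [derivsL_pow, derivsR_pow]
    · intro v hv
      have hne : ¬ ∀ jj, (v jj).2 := by
        intro h
        apply hv
        funext jj
        have ha : (v jj).1 = 0 := Subsingleton.elim _ _
        have hb := h jj
        exact Prod.ext ha hb
      rw [derivsL_pow, if_neg hne, zero_mul, smul_zero]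
  unfold moyalC Str
  rw [key]
  simp only [smul_eq_C_mul, pV, qV]
  simp only [map_mul, eval_C, eval_pow, eval_X]
  rw [zero_pow_eq, zero_pow_eq]
  ring

/-- In `W(1)`: `Str(p₁^i ⋆ q₁^j) = 0` if `i ≠ j`, and `Str(p₁^i ⋆ q₁^i) = i!/2^i`. -/
theorem stmt11 (i j : ℕ) :
    Str (mstar ((pV 1 K 0) ^ i) ((qV 1 K 0) ^ j)) =
      if i = j then (Nat.factorial i : K) / 2 ^ i else 0 := by
  have hdeg : ((pV 1 K 0 : MvPolynomial (Idx 1) K) ^ i).totalDegree = i := by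
    simp [pV, totalDegree_X_pow]
  have h1 : Str (mstar ((pV 1 K 0) ^ i) ((qV 1 K 0) ^ j))
      = ∑ k ∈ Finset.range (i+1), Str (moyalC k ((pV 1 K 0)^i) ((qV 1 K 0)^j)) := by
    unfold mstar Str
    rw [hdeg, map_sum]
  rw [h1]
  by_cases hij : i = j
  · subst hij
    rw [if_pos rfl, Finset.sum_eq_single i]
    · rw [strC]
      simp only [Nat.sub_self, if_pos rfl, mul_one, Nat.descFactorial_self]
      have hf : (Nat.factorial i : K) ≠ 0 := Nat.cast_ne_zero.mpr (Nat.factorial_ne_zero i)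
      have h2 : (2:K)^i ≠ 0 := pow_ne_zero _ two_ne_zero
      push_cast
      field_simp
    · intro k hk hki
      rw [strC]
      have hik : i - k ≠ 0 := by
        have := Finset.mem_range.mp hk; omega
      simp [hik]
    · intro h; exact absurd (Finset.self_mem_range_succ i) h
  · rw [if_neg hij]
    apply Finset.sum_eq_zero
    intro k hk
    rw [strC]
    by_cases hik : i - k = 0
    · by_cases hjk : j - k = 0
      · have hk' : k = i := by have := Finset.mem_range.mp hk; omega
        have hji : j < k := by omega
        rw [Nat.descFactorial_eq_zero_iff_lt.mpr hji]
        simp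
      · simp [hjk]
    · simp [hik]


end
end

section
/- For multi-indices I, J ∈ ℕⁿ, Str(P^I ⋆ Q^J) = δ_{I,J} · I!/2^{|I|}, where P^I = p₁^{i₁}⋯p_n^{i_n}, Q^J = q₁^{j₁}⋯q_n^{j_n}, and Str is evaluation at 0. -/
open MvPolynomial

noncomputable section

variable {K : Type*} [Field K] [CharZero K] {n : ℕ}

set_option linter.unusedSectionVars false

/- ------------------ auxiliary lemmas ------------------ -/

lemma aux_toMultiset_count {σ : Type*} [DecidableEq σ] (d : σ →₀ ℕ) (a : σ) :
    Multiset.count a d.toMultiset = d a := Finsupp.count_toMultiset d a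

lemma eval0_foldl_pderiv {σ : Type*} [Fintype σ] [DecidableEq σ] :
    ∀ (L : List σ) (d : σ →₀ ℕ) (c : K),
    eval (fun _ => (0:K)) (L.foldl (fun F x => pderiv x F) (monomial d c)) =
      if (L : Multiset σ) = d.toMultiset then c * ∏ a, ((d a).factorial : K) else 0 := by
  intro L
  induction L with
  | nil =>
    intro d c
    simp only [List.foldl_nil, eval_monomial]
    by_cases hd : d = 0
    · subst hd
      simp [Finsupp.prod]
    · rw [if_neg]
      · obtain ⟨a, ha⟩ := Finsupp.support_nonempty_iff.2 hd
        rw [Finsupp.prod, Finset.prod_eq_zero ha (zero_pow (Finsupp.mem_support_iff.1 ha))]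
        ring
      · intro h
        apply hd
        ext a
        have := congrArg (Multiset.count a) h
        simpa [aux_toMultiset_count] using this.symm
  | cons x l ih =>
    intro d c
    rw [List.foldl_cons, pderiv_monomial, ih]
    by_cases hx : d x = 0
    · have h1 : ¬ ((↑(x :: l) : Multiset σ) = d.toMultiset) := by
        intro h
        have := congrArg (Multiset.count x) h
        simp [aux_toMultiset_count, hx] at this
      rw [if_neg h1, hx]
      push_cast
      split <;> ring
    · have hmem : x ∈ d.toMultiset := by
        rw [← Multiset.count_pos, aux_toMultiset_count]; omega
      have hsub : (d - Finsupp.single x 1).toMultiset = d.toMultiset.erase x := by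
        ext a
        rw [aux_toMultiset_count, Finsupp.tsub_apply]
        by_cases hax : a = x
        · subst hax
          rw [Multiset.count_erase_self, aux_toMultiset_count, Finsupp.single_eq_same]
        · rw [Multiset.count_erase_of_ne hax, aux_toMultiset_count,
            Finsupp.single_eq_of_ne' (Ne.symm hax), Nat.sub_zero]
      have hiff : ((x :: l : List σ) : Multiset σ) = d.toMultiset ↔
          (l : Multiset σ) = (d - Finsupp.single x 1).toMultiset := by
        rw [hsub, ← Multiset.cons_coe]
        constructor
        · intro h; rw [← h, Multiset.erase_cons_head]
        · intro h; rw [h, Multiset.cons_erase hmem]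
      have key : (d x : K) * ∏ a, (((d - Finsupp.single x 1 : σ →₀ ℕ) a).factorial : K)
          = ∏ a, ((d a).factorial : K) := by
        rw [← Finset.mul_prod_erase Finset.univ
            (fun a => (((d - Finsupp.single x 1 : σ →₀ ℕ) a).factorial : K)) (Finset.mem_univ x),
          ← Finset.mul_prod_erase Finset.univ
            (fun a => ((d a).factorial : K)) (Finset.mem_univ x)]
        have h1 : ∀ a ∈ Finset.univ.erase x,
            (((d - Finsupp.single x 1 : σ →₀ ℕ) a).factorial : K) = ((d a).factorial : K) := by
          intro a ha
          rw [Finsupp.tsub_apply, Finsupp.single_eq_of_ne'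
            (Ne.symm (Finset.ne_of_mem_erase ha)), Nat.sub_zero]
        rw [Finset.prod_congr rfl h1]
        have h2 : (d x) * ((d - Finsupp.single x 1 : σ →₀ ℕ) x).factorial = (d x).factorial := by
          rw [Finsupp.tsub_apply, Finsupp.single_eq_same]
          obtain ⟨m, hm⟩ := Nat.exists_eq_succ_of_ne_zero hx
          rw [hm]; simp [Nat.factorial_succ]
        push_cast [← h2]; ring
      by_cases hc : (l : Multiset σ) = (d - Finsupp.single x 1).toMultiset
      · rw [if_pos hc, if_pos (hiff.2 hc), ← key]; ring
      · rw [if_neg hc, if_neg (fun h => hc (hiff.1 h))]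

lemma count_fn_multiset {α : Type*} [Fintype α] [DecidableEq α] :
    ∀ (k : ℕ) (M : Multiset α), Multiset.card M = k →
    (Finset.univ.filter
        (fun w : Fin k → α => ((List.ofFn w : List α) : Multiset α) = M)).card *
      ∏ a, (M.count a).factorial = k.factorial := by
  intro k
  induction k with
  | zero =>
    intro M hM
    rw [Multiset.card_eq_zero] at hM
    subst hM
    rw [Finset.card_eq_one.2 ⟨(fun i => i.elim0), by
      ext w
      simp [Finset.mem_filter, List.ofFn_zero, Finset.eq_univ_iff_forall]
      constructor
      · intro _; funext i; exact i.elim0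
      · intro h; subst h; rfl⟩]
    simp
  | succ k ih =>
    intro M hM
    have hcard : (Finset.univ.filter
        (fun w : Fin (k+1) → α => ((List.ofFn w : List α) : Multiset α) = M)).card
        = ∑ a : α, if a ∈ M then (Finset.univ.filter
            (fun w : Fin k → α => ((List.ofFn w : List α) : Multiset α) = M.erase a)).card
          else 0 := by
      rw [Finset.card_filter]
      rw [← Fintype.sum_equiv (Fin.consEquiv (fun _ : Fin (k+1) => α))
        (fun p => if ((List.ofFn ((Fin.consEquiv _) p) : List α) : Multiset α) = M then 1 else 0)
        _ (fun p => rfl)]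
      rw [Fintype.sum_prod_type]
      refine Finset.sum_congr rfl (fun a _ => ?_)
      have hcons : ∀ w : Fin k → α,
          ((List.ofFn ((Fin.consEquiv (fun _ : Fin (k+1) => α)) (a, w)) : List α) : Multiset α)
            = a ::ₘ (List.ofFn w : List α) := by
        intro w
        rw [List.ofFn_succ]
        simp [Fin.consEquiv, Multiset.cons_coe]
      by_cases ha : a ∈ M
      · rw [if_pos ha, Finset.card_filter]
        refine Finset.sum_congr rfl (fun w _ => ?_)
        rw [hcons w]
        congr 1
        rw [eq_iff_iff]
        constructor
        · intro h; rw [← h, Multiset.erase_cons_head]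
        · intro h; rw [h, Multiset.cons_erase ha]
      · rw [if_neg ha]
        refine Finset.sum_eq_zero (fun w _ => ?_)
        rw [hcons w, if_neg]
        intro h
        exact ha (h ▸ Multiset.mem_cons_self a _)
    rw [hcard, Finset.sum_mul]
    have hterm : ∀ a : α, (if a ∈ M then (Finset.univ.filter
          (fun w : Fin k → α => ((List.ofFn w : List α) : Multiset α) = M.erase a)).card
        else 0) * ∏ b, (M.count b).factorial
        = (M.count a) * k.factorial := by
      intro a
      by_cases ha : a ∈ M
      · rw [if_pos ha]
        have hprod : ∏ b, (M.count b).factorial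
            = M.count a * ∏ b, ((M.erase a).count b).factorial := by
          rw [← Finset.mul_prod_erase Finset.univ (fun b => (M.count b).factorial)
              (Finset.mem_univ a),
            ← Finset.mul_prod_erase Finset.univ (fun b => ((M.erase a).count b).factorial)
              (Finset.mem_univ a)]
          have h1 : ∀ b ∈ Finset.univ.erase a,
              ((M.erase a).count b).factorial = (M.count b).factorial := by
            intro b hb
            rw [Multiset.count_erase_of_ne (Finset.ne_of_mem_erase hb)]
          rw [Finset.prod_congr rfl h1, Multiset.count_erase_self]
          have hpos : 0 < M.count a := Multiset.count_pos.2 ha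
          obtain ⟨m, hm⟩ := Nat.exists_eq_succ_of_ne_zero hpos.ne'
          rw [hm]
          simp [Nat.factorial_succ]; ring
        rw [hprod, ← mul_assoc, mul_comm _ (M.count a), mul_assoc,
          ih (M.erase a) (by rw [Multiset.card_erase_of_mem ha, hM]; rfl)]
      · rw [if_neg ha, zero_mul, Multiset.count_eq_zero.2 ha, zero_mul]
    rw [Finset.sum_congr rfl (fun a _ => hterm a), ← Finset.sum_mul]
    have hsum : ∑ a : α, M.count a = k + 1 := by
      rw [← hM, ← Multiset.toFinset_sum_count_eq M]
      exact (Finset.sum_subset (Finset.subset_univ _)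
        (fun a _ ha => Multiset.count_eq_zero.2 (fun h => ha (Multiset.mem_toFinset.2 h)))).symm
    rw [hsum, Nat.factorial_succ]

lemma aux_prod_X_pow (f : Idx n → ℕ) :
    (∏ a : Idx n, (X a : MvPolynomial (Idx n) K) ^ f a)
      = monomial (Finsupp.equivFunOnFinite.symm f) 1 := by
  rw [monomial_eq, C_1, one_mul, Finsupp.prod_fintype]
  · exact Finset.prod_congr rfl fun a _ => by
      rw [Finsupp.coe_equivFunOnFinite_symm]
  · intro a; exact pow_zero _

lemma aux_toMult_left (I : Fin n → ℕ) :
    (Finsupp.equivFunOnFinite.symm (Sum.elim I 0) : Idx n →₀ ℕ).toMultiset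
      = (Finsupp.equivFunOnFinite.symm I : Fin n →₀ ℕ).toMultiset.map Sum.inl := by
  ext a
  cases a with
  | inl i =>
    rw [aux_toMultiset_count, Multiset.count_map_eq_count' _ _ Sum.inl_injective,
      aux_toMultiset_count]
    simp
  | inr i =>
    rw [aux_toMultiset_count, Finsupp.coe_equivFunOnFinite_symm]
    rw [Multiset.count_eq_zero.2 (by
      intro h
      obtain ⟨b, _, hb⟩ := Multiset.mem_map.1 h
      exact Sum.inl_ne_inr hb)]
    rfl

lemma aux_toMult_right (J : Fin n → ℕ) :
    (Finsupp.equivFunOnFinite.symm (Sum.elim 0 J) : Idx n →₀ ℕ).toMultiset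
      = (Finsupp.equivFunOnFinite.symm J : Fin n →₀ ℕ).toMultiset.map Sum.inr := by
  ext a
  cases a with
  | inr i =>
    rw [aux_toMultiset_count, Multiset.count_map_eq_count' _ _ Sum.inr_injective,
      aux_toMultiset_count]
    simp
  | inl i =>
    rw [aux_toMultiset_count, Finsupp.coe_equivFunOnFinite_symm]
    rw [Multiset.count_eq_zero.2 (by
      intro h
      obtain ⟨b, _, hb⟩ := Multiset.mem_map.1 h
      exact Sum.inr_ne_inl hb)]
    rfl

lemma aux_card_toMultiset (I : Fin n → ℕ) :
    Multiset.card (Finsupp.equivFunOnFinite.symm I : Fin n →₀ ℕ).toMultiset = ∑ i, I i := by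
  rw [Finsupp.card_toMultiset, Finsupp.sum_fintype]
  · exact Finset.sum_congr rfl fun i _ => by
      rw [Finsupp.coe_equivFunOnFinite_symm]; rfl
  · intro; rfl

/- ------------------ the per-k computation ------------------ -/

lemma strC_s12 (I J : Fin n → ℕ) (k : ℕ) :
    Str (moyalC k
        (monomial (Finsupp.equivFunOnFinite.symm (Sum.elim I 0)) (1:K))
        (monomial (Finsupp.equivFunOnFinite.symm (Sum.elim 0 J)) (1:K))) =
      if (Finsupp.equivFunOnFinite.symm I : Fin n →₀ ℕ).toMultiset
          = (Finsupp.equivFunOnFinite.symm J : Fin n →₀ ℕ).toMultiset then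
        ((Finset.univ.filter (fun v : Fin k → Fin n × Bool =>
            ((List.ofFn v : List (Fin n × Bool)) : Multiset (Fin n × Bool))
              = (Finsupp.equivFunOnFinite.symm I : Fin n →₀ ℕ).toMultiset.map
                  (fun a => (a, true)))).card : K)
          * (((2 ^ k * k.factorial : ℕ) : K)⁻¹
              * ((∏ i, ((I i).factorial : K)) * ∏ i, ((J i).factorial : K)))
      else 0 := by
  classical
  set μI := (Finsupp.equivFunOnFinite.symm I : Fin n →₀ ℕ).toMultiset with hμI
  set μJ := (Finsupp.equivFunOnFinite.symm J : Fin n →₀ ℕ).toMultiset with hμJ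
  set dI := (Finsupp.equivFunOnFinite.symm (Sum.elim I 0) : Idx n →₀ ℕ) with hdI
  set dJ := (Finsupp.equivFunOnFinite.symm (Sum.elim 0 J) : Idx n →₀ ℕ) with hdJ
  have hcI : (∏ a : Idx n, ((dI a).factorial : K)) = ∏ i, ((I i).factorial : K) := by
    rw [Fintype.prod_sum_type]
    simp [hdI, Finsupp.coe_equivFunOnFinite_symm]
  have hcJ : (∏ a : Idx n, ((dJ a).factorial : K)) = ∏ i, ((J i).factorial : K) := by
    rw [Fintype.prod_sum_type]
    simp [hdJ, Finsupp.coe_equivFunOnFinite_symm]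
  have hterm : ∀ v : Fin k → Fin n × Bool,
      (∏ j : Fin k, if (v j).2 then (1:K) else -1) *
        (eval (fun _ => (0:K)) (derivsL v (monomial dI 1)) *
          eval (fun _ => (0:K)) (derivsR v (monomial dJ 1)))
      = if (((List.ofFn v : List (Fin n × Bool)) : Multiset (Fin n × Bool))
              = μI.map (fun a => (a, true)) ∧ μI = μJ) then
          (∏ i, ((I i).factorial : K)) * ∏ i, ((J i).factorial : K)
        else 0 := by
    intro v
    have hLfold : derivsL v (monomial dI (1:K)) =
        ((List.finRange k).map
            (fun j => if (v j).2 then Sum.inl (v j).1 else Sum.inr (v j).1)).foldl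
          (fun F x => pderiv x F) (monomial dI 1) := by
      rw [List.foldl_map]; rfl
    have hRfold : derivsR v (monomial dJ (1:K)) =
        ((List.finRange k).map
            (fun j => if (v j).2 then Sum.inr (v j).1 else Sum.inl (v j).1)).foldl
          (fun G x => pderiv x G) (monomial dJ 1) := by
      rw [List.foldl_map]; rfl
    have hdImult : dI.toMultiset = μI.map Sum.inl := by
      rw [hdI, hμI]; exact aux_toMult_left I
    have hdJmult : dJ.toMultiset = μJ.map Sum.inr := by
      rw [hdJ, hμJ]; exact aux_toMult_right J
    rw [hLfold, hRfold, eval0_foldl_pderiv, eval0_foldl_pderiv, hdImult, hdJmult]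
    -- equivalence of the two multiset conditions
    have hE : ((↑((List.finRange k).map
            (fun j => if (v j).2 then Sum.inl (v j).1 else Sum.inr (v j).1))
              : Multiset (Idx n)) = μI.map Sum.inl
        ∧ (↑((List.finRange k).map
            (fun j => if (v j).2 then Sum.inr (v j).1 else Sum.inl (v j).1))
              : Multiset (Idx n)) = μJ.map Sum.inr)
        ↔ (((List.ofFn v : List (Fin n × Bool)) : Multiset (Fin n × Bool))
              = μI.map (fun a => (a, true)) ∧ μI = μJ) := by
      constructor
      · rintro ⟨h1, h2⟩
        have htrue : ∀ j, (v j).2 = true := by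
          intro j
          by_contra hj
          have hmem : (Sum.inr (v j).1 : Idx n) ∈ (↑((List.finRange k).map
              (fun j => if (v j).2 then Sum.inl (v j).1 else Sum.inr (v j).1))
                : Multiset (Idx n)) := by
            rw [Multiset.mem_coe, List.mem_map]
            exact ⟨j, List.mem_finRange j, by simp [hj]⟩
          rw [h1] at hmem
          obtain ⟨b, _, hb⟩ := Multiset.mem_map.1 hmem
          exact Sum.inl_ne_inr hb
        have hgl : ((List.finRange k).map
            (fun j => if (v j).2 then Sum.inl (v j).1 else Sum.inr (v j).1))
            = ((List.finRange k).map (fun j => (v j).1)).map Sum.inl := by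
          rw [List.map_map]
          exact List.map_congr_left (fun j _ => by simp [htrue j])
        have hgr : ((List.finRange k).map
            (fun j => if (v j).2 then Sum.inr (v j).1 else Sum.inl (v j).1))
            = ((List.finRange k).map (fun j => (v j).1)).map Sum.inr := by
          rw [List.map_map]
          exact List.map_congr_left (fun j _ => by simp [htrue j])
        rw [hgl, ← Multiset.map_coe] at h1
        rw [hgr, ← Multiset.map_coe] at h2
        have hWI := Multiset.map_injective Sum.inl_injective h1
        have hWJ := Multiset.map_injective Sum.inr_injective h2
        refine ⟨?_, by rw [← hWI, ← hWJ]⟩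
        rw [List.ofFn_eq_map, ← hWI, ← Multiset.map_coe, ← Multiset.map_coe,
          Multiset.map_map]
        refine Multiset.map_congr rfl (fun j _ => ?_)
        exact Prod.ext rfl (htrue j)
      · rintro ⟨hC, hIJ⟩
        have htrue : ∀ j, (v j).2 = true := by
          intro j
          have hmem : v j ∈ (↑(List.ofFn v) : Multiset (Fin n × Bool)) := by
            rw [Multiset.mem_coe]
            exact List.mem_ofFn.2 ⟨j, rfl⟩
          rw [hC] at hmem
          obtain ⟨b, _, hb⟩ := Multiset.mem_map.1 hmem
          rw [← hb]
        have hW : (↑((List.finRange k).map (fun j => (v j).1)) : Multiset (Fin n)) = μI := by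
          have h := congrArg (Multiset.map Prod.fst) hC
          rw [List.ofFn_eq_map, ← Multiset.map_coe, Multiset.map_map,
            Multiset.map_map] at h
          simpa using h
        constructor
        · rw [List.map_congr_left (l := List.finRange k)
            (f := fun j => if (v j).2 then Sum.inl (v j).1 else Sum.inr (v j).1)
            (g := fun j => Sum.inl (v j).1) (fun j _ => by simp [htrue j]),
            show (fun j => (Sum.inl (v j).1 : Idx n)) = Sum.inl ∘ (fun j => (v j).1) from rfl,
            ← List.map_map, ← Multiset.map_coe, hW]
        · rw [List.map_congr_left (l := List.finRange k)
            (f := fun j => if (v j).2 then Sum.inr (v j).1 else Sum.inl (v j).1)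
            (g := fun j => Sum.inr (v j).1) (fun j _ => by simp [htrue j]),
            show (fun j => (Sum.inr (v j).1 : Idx n)) = Sum.inr ∘ (fun j => (v j).1) from rfl,
            ← List.map_map, ← Multiset.map_coe, hW, hIJ]
    by_cases hP : (((List.ofFn v : List (Fin n × Bool)) : Multiset (Fin n × Bool))
        = μI.map (fun a => (a, true)) ∧ μI = μJ)
    · obtain ⟨hA, hB⟩ := hE.2 hP
      rw [if_pos hA, if_pos hB, if_pos hP]
      have htrue : ∀ j, (v j).2 = true := by
        intro j
        have hmem : v j ∈ (↑(List.ofFn v) : Multiset (Fin n × Bool)) := by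
          rw [Multiset.mem_coe]
          exact List.mem_ofFn.2 ⟨j, rfl⟩
        rw [hP.1] at hmem
        obtain ⟨b, _, hb⟩ := Multiset.mem_map.1 hmem
        rw [← hb]
      have hsign : (∏ j : Fin k, if (v j).2 then (1:K) else -1) = 1 := by
        rw [Finset.prod_eq_one (fun j _ => by simp [htrue j])]
      rw [hsign, hcI, hcJ]
      ring
    · rw [if_neg hP]
      rcases not_and_or.1 (fun h => hP (hE.1 h)) with h | h
      · rw [if_neg h]; ring
      · rw [if_neg h]; ring
  -- sum over v
  have hmc : Str (moyalC k (monomial dI (1:K)) (monomial dJ 1))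
      = ((2 ^ k * k.factorial : ℕ) : K)⁻¹ *
        ∑ v : Fin k → Fin n × Bool,
          (∏ j : Fin k, if (v j).2 then (1:K) else -1) *
            (eval (fun _ => (0:K)) (derivsL v (monomial dI 1)) *
              eval (fun _ => (0:K)) (derivsR v (monomial dJ 1))) := by
    show eval _ _ = _
    rw [moyalC, smul_eval, map_sum]
    congr 1
    exact Finset.sum_congr rfl fun v _ => by rw [smul_eval, map_mul]
  rw [hmc, Finset.sum_congr rfl fun v _ => hterm v]
  by_cases hIJ : μI = μJ
  · have hand : ∀ v : Fin k → Fin n × Bool,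
        ((((List.ofFn v : List (Fin n × Bool)) : Multiset (Fin n × Bool))
            = μI.map (fun a => (a, true)) ∧ μI = μJ))
          = (((List.ofFn v : List (Fin n × Bool)) : Multiset (Fin n × Bool))
            = μI.map (fun a => (a, true))) := fun v => by
      rw [eq_iff_iff]; exact and_iff_left hIJ
    simp only [hand]
    rw [if_pos hIJ, Finset.sum_ite, Finset.sum_const, Finset.sum_const_zero, add_zero,
      nsmul_eq_mul]
    push_cast
    ring
  · rw [if_neg hIJ]
    rw [Finset.sum_eq_zero (fun v _ => if_neg (fun h => hIJ h.2)), mul_zero]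


/-- `Str(P^I ⋆ Q^J) = δ_{I,J} I!/2^{|I|}` for multi-indices `I, J ∈ ℕⁿ`. -/
theorem stmt12 (I J : Fin n → ℕ) :
    Str (mstar (∏ i, (pV n K i) ^ (I i)) (∏ i, (qV n K i) ^ (J i))) =
      if I = J then (∏ i, (Nat.factorial (I i) : K)) / 2 ^ (∑ i, I i) else 0 := by
  classical
  set μI := (Finsupp.equivFunOnFinite.symm I : Fin n →₀ ℕ).toMultiset with hμI
  set μJ := (Finsupp.equivFunOnFinite.symm J : Fin n →₀ ℕ).toMultiset with hμJ
  have hF : (∏ i, (pV n K i) ^ (I i))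
      = monomial (Finsupp.equivFunOnFinite.symm (Sum.elim I 0 : Idx n → ℕ)) 1 := by
    rw [← aux_prod_X_pow (Sum.elim I 0 : Idx n → ℕ), Fintype.prod_sum_type]
    simp [pV]
  have hG : (∏ i, (qV n K i) ^ (J i))
      = monomial (Finsupp.equivFunOnFinite.symm (Sum.elim 0 J : Idx n → ℕ)) 1 := by
    rw [← aux_prod_X_pow (Sum.elim 0 J : Idx n → ℕ), Fintype.prod_sum_type]
    simp [qV]
  have htd : (monomial (Finsupp.equivFunOnFinite.symm (Sum.elim I 0 : Idx n → ℕ))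
      (1:K)).totalDegree = ∑ i, I i := by
    have hsf : (Finsupp.equivFunOnFinite.symm (Sum.elim I 0 : Idx n → ℕ) : Idx n →₀ ℕ).sum
        (fun _ e => e) = ∑ a : Idx n,
          (Finsupp.equivFunOnFinite.symm (Sum.elim I 0 : Idx n → ℕ) : Idx n →₀ ℕ) a :=
      Finsupp.sum_fintype _ _ (fun _ => rfl)
    rw [totalDegree_monomial _ one_ne_zero, hsf, Fintype.sum_sum_type]
    simp [Finsupp.coe_equivFunOnFinite_symm]
  rw [hF, hG, mstar, htd]
  have hsum : Str (∑ k ∈ Finset.range (∑ i, I i + 1), moyalC k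
      (monomial (Finsupp.equivFunOnFinite.symm (Sum.elim I 0 : Idx n → ℕ)) (1:K))
      (monomial (Finsupp.equivFunOnFinite.symm (Sum.elim 0 J : Idx n → ℕ)) 1))
      = ∑ k ∈ Finset.range (∑ i, I i + 1), Str (moyalC k
        (monomial (Finsupp.equivFunOnFinite.symm (Sum.elim I 0 : Idx n → ℕ)) (1:K))
        (monomial (Finsupp.equivFunOnFinite.symm (Sum.elim 0 J : Idx n → ℕ)) 1)) :=
    map_sum (eval fun _ => (0:K)) _ _
  rw [hsum, Finset.sum_congr rfl fun k _ => strC_s12 I J k]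
  by_cases hIJ : I = J
  · subst hIJ
    simp only [← hμI, if_pos rfl]
    set s := ∑ i, I i with hs
    set nI := ∏ i, (I i).factorial with hnI
    have hcardμ : Multiset.card (μI.map (fun a => (a, true))) = s := by
      rw [Multiset.card_map, hμI, aux_card_toMultiset]
    rw [Finset.sum_eq_single_of_mem s (Finset.self_mem_range_succ s)]
    · -- value at k = s
      have hcnt := count_fn_multiset s (μI.map (fun a => (a, true))) hcardμ
      have hprodcnt : (∏ x : Fin n × Bool,
          ((μI.map (fun a => (a, true))).count x).factorial) = nI := by
        rw [Fintype.prod_prod_type]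
        refine Finset.prod_congr rfl (fun a _ => ?_)
        have h1 : (μI.map (fun a => (a, true))).count (a, true) = I a := by
          have hinj : Function.Injective (fun a : Fin n => (a, true)) :=
            fun x y h => by simpa using congrArg Prod.fst h
          have h2 := Multiset.count_map_eq_count' (fun a : Fin n => (a, true)) μI hinj a
          rw [hμI, aux_toMultiset_count, Finsupp.coe_equivFunOnFinite_symm] at h2
          exact h2
        have h0 : (μI.map (fun a => (a, true))).count (a, false) = 0 := by
          rw [Multiset.count_eq_zero]
          intro hm
          obtain ⟨b, _, hb⟩ := Multiset.mem_map.1 hm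
          simp at hb
        rw [Fintype.prod_bool, h1, h0]
        simp [Nat.factorial]
      rw [hprodcnt] at hcnt
      have hNK : ((Finset.univ.filter (fun v : Fin s → Fin n × Bool =>
          ((List.ofFn v : List (Fin n × Bool)) : Multiset (Fin n × Bool))
            = μI.map (fun a => (a, true)))).card : K) * (nI : K)
          = (s.factorial : K) := by
        exact_mod_cast congrArg (Nat.cast : ℕ → K) hcnt
      have hnI0 : (nI : K) ≠ 0 := by
        rw [hnI]
        push_cast
        exact Finset.prod_ne_zero_iff.2
          (fun i _ => Nat.cast_ne_zero.2 (Nat.factorial_ne_zero _))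
      have h20 : (2 : K) ^ s ≠ 0 := pow_ne_zero _ two_ne_zero
      have hs0 : ((s.factorial : ℕ) : K) ≠ 0 :=
        Nat.cast_ne_zero.2 (Nat.factorial_ne_zero _)
      have hnIprod : (∏ i, ((I i).factorial : K)) = (nI : K) := by
        rw [hnI]; push_cast; rfl
      rw [hnIprod]
      push_cast
      field_simp
      linear_combination hNK
    · intro k hk hks
      -- filter is empty for k ≠ s
      have : (Finset.univ.filter (fun v : Fin k → Fin n × Bool =>
          ((List.ofFn v : List (Fin n × Bool)) : Multiset (Fin n × Bool))
            = μI.map (fun a => (a, true)))).card = 0 := by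
        rw [Finset.card_eq_zero, Finset.filter_eq_empty_iff]
        intro v _
        intro h
        apply hks
        have := congrArg Multiset.card h
        rwa [Multiset.coe_card, List.length_ofFn, hcardμ] at this
      rw [this]
      push_cast
      ring
  · rw [if_neg hIJ]
    have hμne : ¬ μI = μJ := by
      intro h
      apply hIJ
      funext i
      have := congrArg (Multiset.count i) h
      rwa [hμI, hμJ, aux_toMultiset_count, aux_toMultiset_count,
        Finsupp.coe_equivFunOnFinite_symm,
        Finsupp.coe_equivFunOnFinite_symm] at this
    rw [Finset.sum_eq_zero (fun k _ => if_neg hμne)]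

end
end

section
/- Every linear operator T on the polynomial algebra P = K[x₁,...,x_n] can be written as the (locally finite) series T = Σ_N (1/N!) · (m ∘ (T ⊗ 𝒮) ∘ Δ)(x^N) · ∂^N/∂x^N, where the sum is over multi-indices N; i.e., applied to any polynomial, only finitely many terms are nonzero and the sum gives T. -/
open MvPolynomial

set_option linter.unusedSectionVars false
set_option maxHeartbeats 1000000

noncomputable section

variable {K : Type*} [Field K] [CharZero K] {n : ℕ}

/-- The monomial `x^N = x₁^{N₁} ⋯ xₙ^{Nₙ}`. -/
def xPow (N : Fin n → ℕ) : MvPolynomial (Fin n) K := ∏ i, X i ^ N i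

/-- The iterated partial derivative `∂^N/∂x^N`. -/
def pd (N : Fin n → ℕ) (Q : MvPolynomial (Fin n) K) : MvPolynomial (Fin n) K :=
  (List.finRange n).foldl (fun Q i => (fun R => pderiv i R)^[N i] Q) Q

/-- The `N`-th term of the differential-operator expansion of `T`:
`(1/N!) (m ∘ (T ⊗ 𝒮) ∘ Δ)(x^N) ∂^N/∂x^N` applied to `Q`, where
`(m ∘ (T ⊗ 𝒮) ∘ Δ)(x^N) = Σ_{R+S=N} (−1)^{|S|} (N!/(R!S!)) T(x^R) x^S`. -/
def hopfTerm (T : MvPolynomial (Fin n) K →ₗ[K] MvPolynomial (Fin n) K)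
    (Q : MvPolynomial (Fin n) K) (N : Fin n → ℕ) : MvPolynomial (Fin n) K :=
  ((∏ i, Nat.factorial (N i) : ℕ) : K)⁻¹ •
    ((∑ S ∈ Finset.Iic N,
        ((-1 : K) ^ (∑ i, S i) * ((∏ i, Nat.factorial (N i) : ℕ) : K) /
            (((∏ i, Nat.factorial (N i - S i) : ℕ) : K) *
              ((∏ i, Nat.factorial (S i) : ℕ) : K))) •
          (T (xPow (fun i => N i - S i)) * xPow S)) * pd N Q)

/-! ### Auxiliary lemmas -/

private def toFs (N : Fin n → ℕ) : Fin n →₀ ℕ := Finsupp.equivFunOnFinite.symm N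

@[simp] private lemma toFs_apply (N : Fin n → ℕ) (i : Fin n) : toFs N i = N i := rfl

private lemma factorial_prod_ne_zero (c : Fin n → ℕ) :
    ((∏ i, Nat.factorial (c i) : ℕ) : K) ≠ 0 :=
  Nat.cast_ne_zero.mpr (Finset.prod_ne_zero_iff.mpr fun i _ => (c i).factorial_ne_zero)

private lemma pderiv_iterate_monomial (i : Fin n) (k : ℕ) (s : Fin n →₀ ℕ) (a : K) :
    (fun R => pderiv i R)^[k] (monomial s a) =
      monomial (s - Finsupp.single i k) (a * ((s i).descFactorial k : ℕ)) := by
  induction k with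
  | zero => simp
  | succ k ih =>
    rw [Function.iterate_succ_apply', ih, pderiv_monomial]
    have h1 : (s - Finsupp.single i k) i = s i - k := by
      simp [Finsupp.tsub_apply]
    have h2 : s - Finsupp.single i k - Finsupp.single i 1 = s - Finsupp.single i (k+1) := by
      rw [tsub_tsub, ← Finsupp.single_add]
    rw [h1, h2, Nat.descFactorial_succ]
    push_cast
    ring_nf

private lemma pd_list_monomial (N : Fin n → ℕ) (l : List (Fin n)) (hl : l.Nodup)
    (s : Fin n →₀ ℕ) (a : K) :
    l.foldl (fun Q i => (fun R => pderiv i R)^[N i] Q) (monomial s a) =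
      monomial (s - (l.map fun i => Finsupp.single i (N i)).sum)
        (a * (((l.map fun i => (s i).descFactorial (N i)).prod : ℕ) : K)) := by
  induction l generalizing s a with
  | nil => simp
  | cons i l ih =>
    rw [List.foldl_cons, pderiv_iterate_monomial,
      ih (List.nodup_cons.mp hl).2]
    have hi : i ∉ l := (List.nodup_cons.mp hl).1
    congr 1
    · rw [List.map_cons, List.sum_cons, tsub_tsub]
    · have : (l.map fun j => ((s - Finsupp.single i (N i)) j).descFactorial (N j))
          = l.map fun j => (s j).descFactorial (N j) := by
        apply List.map_congr_left
        intro j hj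
        have : (s - Finsupp.single i (N i)) j = s j := by
          have : j ≠ i := fun h => hi (h ▸ hj)
          simp [Finsupp.tsub_apply, Finsupp.single_apply, Ne.symm this]
        rw [this]
      rw [this, List.map_cons, List.prod_cons]
      push_cast
      ring

private lemma sum_single_eq_toFs (N : Fin n → ℕ) :
    (∑ i, Finsupp.single i (N i)) = toFs N := by
  ext j
  rw [Finsupp.finset_sum_apply]
  simp [Finsupp.single_apply, toFs]

private lemma pd_monomial (N : Fin n → ℕ) (s : Fin n →₀ ℕ) (a : K) :
    pd N (monomial s a) =
      monomial (s - toFs N) (a * ((∏ i, (s i).descFactorial (N i) : ℕ) : K)) := by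
  unfold pd
  rw [pd_list_monomial N _ (List.nodup_finRange n)]
  have h1 : ((List.finRange n).map fun i => Finsupp.single i (N i)).sum = toFs N := by
    rw [← Fin.sum_univ_def (fun i => Finsupp.single i (N i)), sum_single_eq_toFs]
  rw [h1, Fin.prod_univ_def]

private lemma pd_foldl_linear (N : Fin n → ℕ) (l : List (Fin n))
    (f : MvPolynomial (Fin n) K →ₗ[K] MvPolynomial (Fin n) K) (Q : MvPolynomial (Fin n) K) :
    l.foldl (fun Q i => (fun R => pderiv i R)^[N i] Q) (f Q) =
      (l.foldl (fun f i => ((pderiv i : Derivation K _ _).toLinearMap ^ (N i)) ∘ₗ f) f) Q := by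
  induction l generalizing f with
  | nil => rfl
  | cons i l ih =>
    rw [List.foldl_cons, List.foldl_cons]
    have : (fun R => pderiv i R)^[N i] (f Q)
        = (((pderiv i : Derivation K _ _).toLinearMap ^ (N i)) ∘ₗ f) Q := by
      rw [LinearMap.comp_apply, Module.End.pow_apply]
      rfl
    rw [this, ih]

private lemma pd_sum {ι : Type*} (N : Fin n → ℕ) (t : Finset ι)
    (f : ι → MvPolynomial (Fin n) K) :
    pd N (∑ i ∈ t, f i) = ∑ i ∈ t, pd N (f i) := by
  unfold pd
  have h : ∀ Q : MvPolynomial (Fin n) K,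
      (List.finRange n).foldl (fun Q i => (fun R => pderiv i R)^[N i] Q) Q =
      ((List.finRange n).foldl
        (fun f i => ((pderiv i : Derivation K _ _).toLinearMap ^ (N i)) ∘ₗ f)
        LinearMap.id) Q := fun Q => pd_foldl_linear N _ LinearMap.id Q
  simp_rw [h]
  rw [map_sum]

private lemma prod_monomial_one {ι : Type*} [DecidableEq ι] (t : Finset ι)
    (d : ι → (Fin n →₀ ℕ)) :
    (∏ i ∈ t, (monomial (d i) (1:K))) = monomial (∑ i ∈ t, d i) 1 := by
  induction t using Finset.induction with
  | empty => simp
  | insert _ _ h ih =>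
    rename_i i t
    rw [Finset.prod_insert h, Finset.sum_insert h, ih, monomial_mul, one_mul]

private lemma xPow_eq (N : Fin n → ℕ) :
    (xPow N : MvPolynomial (Fin n) K) = monomial (toFs N) 1 := by
  unfold xPow
  have : ∀ i : Fin n, (X i ^ N i : MvPolynomial (Fin n) K)
      = monomial (Finsupp.single i (N i)) 1 := fun i => X_pow_eq_monomial
  simp_rw [this, prod_monomial_one, sum_single_eq_toFs]

private lemma alt_sum_choose (m : ℕ) :
    ∑ k ∈ Finset.range (m+1), (-1:K)^k * (m.choose k : K) = if m = 0 then 1 else 0 := by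
  have := Int.alternating_sum_range_choose (n := m)
  have h2 : ((∑ i ∈ Finset.range (m+1), ((-1:ℤ)^i * (m.choose i : ℤ)) : ℤ) : K)
      = ∑ k ∈ Finset.range (m+1), (-1:K)^k * (m.choose k : K) := by push_cast; rfl
  rw [← h2, this]
  split <;> simp

private lemma coord_sum (t r : ℕ) (h : r ≤ t) :
    (∑ k ∈ Finset.Iic (t - r), ((-1:K)^k * (t.factorial : K) /
      ((r.factorial : K) * (k.factorial : K) * (((t - r - k).factorial : K)))))
    = if r = t then 1 else 0 := by
  set m := t - r with hm
  have key : ∀ k ∈ Finset.Iic m, ((-1:K)^k * (t.factorial : K) /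
      ((r.factorial : K) * (k.factorial : K) * (((m - k).factorial : K))))
      = (-1:K)^k * (m.choose k : K)
        * ((t.factorial : K) / ((r.factorial : K) * (m.factorial : K))) := by
    intro k hk
    have hk' : k ≤ m := Finset.mem_Iic.mp hk
    have hc := Nat.choose_mul_factorial_mul_factorial hk'
    have hne : ∀ j : ℕ, ((j.factorial : K) ≠ 0) := fun j =>
      Nat.cast_ne_zero.mpr j.factorial_ne_zero
    have hCne : ((m.choose k : ℕ) : K) ≠ 0 :=
      Nat.cast_ne_zero.mpr (Nat.choose_pos hk').ne'
    have d1 : ((r.factorial:K) * k.factorial * (m-k).factorial) ≠ 0 :=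
      mul_ne_zero (mul_ne_zero (hne r) (hne k)) (hne (m-k))
    have d2 : ((r.factorial:K) * m.factorial) ≠ 0 := mul_ne_zero (hne r) (hne m)
    rw [mul_div_assoc] at *
    have hmf : (m.factorial:K) = (m.choose k:K) * k.factorial * (m-k).factorial := by
      exact_mod_cast hc.symm
    have d3 : (r.factorial:K) * ((m.choose k:K) * k.factorial * (m-k).factorial) ≠ 0 := by
      refine mul_ne_zero (hne r) (mul_ne_zero (mul_ne_zero hCne (hne k)) (hne (m-k)))
    have hfrac : (t.factorial:K)/((r.factorial:K) * k.factorial * (m-k).factorial)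
        = (m.choose k:K) * ((t.factorial:K)/((r.factorial:K) * m.factorial)) := by
      rw [hmf, mul_div_assoc']
      rw [div_eq_div_iff d1 d3]
      ring
    rw [hfrac]
    ring
  have hIr : Finset.Iic m = Finset.range (m+1) := by ext x; simp [Nat.lt_succ_iff]
  rw [Finset.sum_congr rfl key, ← Finset.sum_mul, hIr, alt_sum_choose]
  by_cases hm0 : m = 0
  · have : r = t := by omega
    subst this
    simp [hm0, div_self (show ((r.factorial:ℕ):K) ≠ 0 from
      Nat.cast_ne_zero.mpr r.factorial_ne_zero)]
  · have : r ≠ t := by omega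
    simp [hm0, this]

private lemma reindex_sum {M : Type*} [AddCommMonoid M] (sf : Fin n → ℕ)
    (G : (Fin n → ℕ) → (Fin n → ℕ) → M) :
    ∑ N ∈ Finset.Iic sf, ∑ S ∈ Finset.Iic N, G (fun i => N i - S i) S
      = ∑ R ∈ Finset.Iic sf, ∑ S ∈ Finset.Iic (fun i => sf i - R i), G R S := by
  rw [Finset.sum_sigma' (Finset.Iic sf) (fun N => Finset.Iic N)
      (fun N S => G (fun i => N i - S i) S),
    Finset.sum_sigma' (Finset.Iic sf) (fun R => Finset.Iic (fun i => sf i - R i))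
      (fun R S => G R S)]
  refine Finset.sum_nbij' (fun x => ⟨fun i => x.1 i - x.2 i, x.2⟩)
    (fun y => ⟨fun i => y.1 i + y.2 i, y.2⟩) ?_ ?_ ?_ ?_ ?_
  · rintro ⟨N, S⟩ hx
    simp only [Finset.mem_sigma, Finset.mem_Iic, Pi.le_def] at hx ⊢
    exact ⟨fun i => by have := hx.1 i; omega,
      fun i => by have h1 := hx.1 i; have h2 := hx.2 i; omega⟩
  · rintro ⟨R, S⟩ hy
    simp only [Finset.mem_sigma, Finset.mem_Iic, Pi.le_def] at hy ⊢
    exact ⟨fun i => by have h1 := hy.1 i; have h2 := hy.2 i; omega,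
      fun i => by have h1 := hy.1 i; have h2 := hy.2 i; omega⟩
  · rintro ⟨N, S⟩ hx
    simp only [Finset.mem_sigma, Finset.mem_Iic, Pi.le_def] at hx
    have : (fun i => N i - S i + S i) = N := by
      funext i; have := hx.2 i; omega
    simp only [this]
  · rintro ⟨R, S⟩ hy
    simp only [Finset.mem_sigma, Finset.mem_Iic, Pi.le_def] at hy
    have : (fun i => R i + S i - S i) = R := by funext i; omega
    simp only [this]
  · rintro ⟨N, S⟩ _; rfl

private lemma Iic_pi_eq (m : Fin n → ℕ) :
    (Finset.Iic m : Finset (Fin n → ℕ)) = Fintype.piFinset fun i => Finset.Iic (m i) := by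
  ext x; simp [Fintype.mem_piFinset, Pi.le_def]

private lemma sum_prod_eq (m : Fin n → ℕ) (g : Fin n → ℕ → K) :
    ∑ S ∈ Finset.Iic m, ∏ i, g i (S i) = ∏ i, ∑ k ∈ Finset.Iic (m i), g i k := by
  rw [Iic_pi_eq, Finset.prod_univ_sum]

private lemma scalar_helper (A B C d a sgn : K) (hA : A ≠ 0) (hB : B ≠ 0) (hC : C ≠ 0) :
    A⁻¹ * (sgn * A / B) * (a * d) = a * (sgn * (C * d) / (B * C)) := by
  field_simp

/-- The canonical `(R,S)`-indexed term. -/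
private def G (T : MvPolynomial (Fin n) K →ₗ[K] MvPolynomial (Fin n) K)
    (s : Fin n →₀ ℕ) (a : K) (R S : Fin n → ℕ) : MvPolynomial (Fin n) K :=
  (a * ((-1:K) ^ (∑ i, S i) * ((∏ i, Nat.factorial (s i) : ℕ) : K) /
      (((∏ i, Nat.factorial (R i) : ℕ) : K) * ((∏ i, Nat.factorial (S i) : ℕ) : K) *
        ((∏ i, Nat.factorial (s i - R i - S i) : ℕ) : K)))) •
    (T (xPow R) * monomial (s - toFs R) 1)

private lemma hopfTerm_monomial_expand
    (T : MvPolynomial (Fin n) K →ₗ[K] MvPolynomial (Fin n) K)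
    (s : Fin n →₀ ℕ) (a : K) (N : Fin n → ℕ) (hN : ∀ i, N i ≤ s i) :
    hopfTerm T (monomial s a) N
      = ∑ S ∈ Finset.Iic N, G T s a (fun i => N i - S i) S := by
  unfold hopfTerm
  rw [pd_monomial, Finset.sum_mul, Finset.smul_sum]
  refine Finset.sum_congr rfl ?_
  intro S hS
  have hSle : ∀ i, S i ≤ N i := Finset.mem_Iic.mp hS
  unfold G
  set dK : K := ((∏ i, (s i).descFactorial (N i) : ℕ) : K) with hdK
  rw [smul_mul_assoc, smul_smul, mul_assoc, xPow_eq S, monomial_mul, one_mul]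
  have hexp : toFs S + (s - toFs N) = s - toFs (fun i => N i - S i) := by
    ext j
    simp only [Finsupp.add_apply, Finsupp.tsub_apply, toFs_apply]
    have h1 := hSle j; have h2 := hN j
    omega
  rw [hexp]
  have hmono : (monomial (s - toFs fun i => N i - S i)) (a * dK)
      = (a * dK) • (monomial (s - toFs fun i => N i - S i)) (1:K) := by
    rw [smul_monomial, smul_eq_mul, mul_one]
  rw [hmono, mul_smul_comm, smul_smul]
  congr 1
  have h3 : ∀ i, s i - (N i - S i) - S i = s i - N i := fun i => by
    have h1 := hSle i; have h2 := hN i; omega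
  simp only [h3]
  have hd : ((∏ i, Nat.factorial (s i - N i) : ℕ) : K) * dK
      = ((∏ i, Nat.factorial (s i) : ℕ) : K) := by
    rw [hdK, ← Nat.cast_mul, ← Finset.prod_mul_distrib]
    congr 1
    exact Finset.prod_congr rfl fun i _ => Nat.factorial_mul_descFactorial (hN i)
  have hne1 := factorial_prod_ne_zero (K := K) N
  have hne2 := factorial_prod_ne_zero (K := K) (fun i => N i - S i)
  have hne3 := factorial_prod_ne_zero (K := K) S
  have hne4 := factorial_prod_ne_zero (K := K) (fun i => s i - N i)
  rw [← hd]
  exact scalar_helper _ _ _ _ _ _ hne1 (mul_ne_zero hne2 hne3) hne4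

private lemma inner_sum_eq
    (T : MvPolynomial (Fin n) K →ₗ[K] MvPolynomial (Fin n) K)
    (s : Fin n →₀ ℕ) (a : K) (R : Fin n → ℕ) (hR : ∀ i, R i ≤ s i) :
    ∑ S ∈ Finset.Iic (fun i => s i - R i), G T s a R S
      = (if R = (fun i => s i) then a else 0) • (T (xPow R) * monomial (s - toFs R) 1) := by
  unfold G
  rw [← Finset.sum_smul]
  congr 1
  have hfac : ∀ S ∈ Finset.Iic (fun i => s i - R i),
      a * ((-1:K) ^ (∑ i, S i) * ((∏ i, Nat.factorial (s i) : ℕ) : K) /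
        (((∏ i, Nat.factorial (R i) : ℕ) : K) * ((∏ i, Nat.factorial (S i) : ℕ) : K) *
          ((∏ i, Nat.factorial (s i - R i - S i) : ℕ) : K)))
      = a * ∏ i, ((-1:K)^(S i) * ((s i).factorial : K) /
          (((R i).factorial : K) * ((S i).factorial : K)
            * (((s i - R i - S i).factorial : K)))) := by
    intro S _
    congr 1
    rw [Finset.prod_div_distrib]
    congr 1
    · rw [Finset.prod_mul_distrib, Finset.prod_pow_eq_pow_sum]
      push_cast
      ring
    · push_cast
      rw [Finset.prod_mul_distrib, Finset.prod_mul_distrib]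
  rw [Finset.sum_congr rfl hfac, ← Finset.mul_sum,
    sum_prod_eq (fun i => s i - R i) (fun i k => ((-1:K)^k * ((s i).factorial : K) /
      (((R i).factorial : K) * (k.factorial : K) * (((s i - R i - k).factorial : K)))))]
  have hcoord : ∀ i : Fin n, (∑ k ∈ Finset.Iic (s i - R i),
      ((-1:K)^k * ((s i).factorial : K) /
        (((R i).factorial : K) * (k.factorial : K) * (((s i - R i - k).factorial : K)))))
      = if R i = s i then 1 else 0 := fun i => coord_sum (s i) (R i) (hR i)
  rw [Finset.prod_congr rfl fun i _ => hcoord i, Finset.prod_boole]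
  by_cases h : R = (fun i => s i)
  · have : ∀ i ∈ Finset.univ, R i = s i := fun i _ => congrFun h i
    simp [h, if_pos this, mul_one]
  · have : ¬ ∀ i ∈ Finset.univ, R i = s i := by
      intro hall
      exact h (funext fun i => hall i (Finset.mem_univ i))
    simp [h, if_neg this]
    exact fun hall => absurd (funext hall) h

private lemma hopfTerm_monomial_zero
    (T : MvPolynomial (Fin n) K →ₗ[K] MvPolynomial (Fin n) K)
    (s : Fin n →₀ ℕ) (a : K) (N : Fin n → ℕ) (hN : ¬ ∀ i, N i ≤ s i) :
    hopfTerm T (monomial s a) N = 0 := by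
  unfold hopfTerm
  rw [pd_monomial]
  have : (∏ i, (s i).descFactorial (N i) : ℕ) = 0 := by
    push_neg at hN
    obtain ⟨i, hi⟩ := hN
    exact Finset.prod_eq_zero (Finset.mem_univ i)
      (Nat.descFactorial_eq_zero_iff_lt.mpr hi)
  rw [this]
  simp

private lemma sum_hopfTerm_monomial
    (T : MvPolynomial (Fin n) K →ₗ[K] MvPolynomial (Fin n) K)
    (s : Fin n →₀ ℕ) (a : K) (D : Fin n → ℕ) (hD : ∀ i, s i ≤ D i) :
    ∑ N ∈ Finset.Iic D, hopfTerm T (monomial s a) N = T (monomial s a) := by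
  set sf : Fin n → ℕ := fun i => s i with hsf
  have hsub : Finset.Iic sf ⊆ Finset.Iic D := by
    intro N hNmem
    rw [Finset.mem_Iic] at *
    exact le_trans hNmem hD
  rw [← Finset.sum_subset hsub (fun N _ hNn => hopfTerm_monomial_zero T s a N
    (fun hle => hNn (Finset.mem_Iic.mpr hle)))]
  have hexp : ∀ N ∈ Finset.Iic sf, hopfTerm T (monomial s a) N
      = ∑ S ∈ Finset.Iic N, G T s a (fun i => N i - S i) S := fun N hNmem =>
    hopfTerm_monomial_expand T s a N (Finset.mem_Iic.mp hNmem)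
  rw [Finset.sum_congr rfl hexp, reindex_sum sf (G T s a)]
  have hinner : ∀ R ∈ Finset.Iic sf, (∑ S ∈ Finset.Iic (fun i => sf i - R i), G T s a R S)
      = (if R = sf then a else 0) • (T (xPow R) * monomial (s - toFs R) 1) := fun R hRmem =>
    inner_sum_eq T s a R (Finset.mem_Iic.mp hRmem)
  rw [Finset.sum_congr rfl hinner]
  have hite : ∀ R ∈ Finset.Iic sf,
      (if R = sf then a else 0) • (T (xPow R) * monomial (s - toFs R) 1)
      = if R = sf then a • (T (xPow R) * monomial (s - toFs R) 1) else 0 := by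
    intro R _
    split <;> simp
  rw [Finset.sum_congr rfl hite,
    Finset.sum_ite_eq' (Finset.Iic sf) sf
      (fun R => a • (T (xPow R) * monomial (s - toFs R) 1))]
  rw [if_pos (Finset.mem_Iic.mpr le_rfl)]
  have htf : toFs sf = s := Finsupp.equivFunOnFinite_symm_coe s
  rw [htf, tsub_self]
  have h1 : (monomial (0 : Fin n →₀ ℕ)) (1:K) = 1 := by
    rw [monomial_zero', C_1]
  rw [h1, mul_one, ← map_smul]
  congr 1
  rw [xPow_eq, htf, smul_monomial, smul_eq_mul, mul_one]

private lemma hopfTerm_sum {ι : Type*}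
    (T : MvPolynomial (Fin n) K →ₗ[K] MvPolynomial (Fin n) K)
    (t : Finset ι) (f : ι → MvPolynomial (Fin n) K) (N : Fin n → ℕ) :
    hopfTerm T (∑ i ∈ t, f i) N = ∑ i ∈ t, hopfTerm T (f i) N := by
  unfold hopfTerm
  rw [pd_sum, Finset.mul_sum, Finset.smul_sum]

/-- Every linear operator `T` on `P = K[x₁,…,xₙ]` equals the locally finite series
`Σ_N (1/N!) (m ∘ (T ⊗ 𝒮) ∘ Δ)(x^N) ∂^N/∂x^N`: on each polynomial `Q` only finitely
many terms are nonzero and their sum is `T Q`. -/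
theorem stmt15 (T : MvPolynomial (Fin n) K →ₗ[K] MvPolynomial (Fin n) K)
    (Q : MvPolynomial (Fin n) K) :
    (Function.support (hopfTerm T Q)).Finite ∧
    ∑ᶠ N : Fin n → ℕ, hopfTerm T Q N = T Q := by
  classical
  set D : Fin n → ℕ := fun i => Q.support.sup (fun s => s i) with hDdef
  have hQ : Q = ∑ s ∈ Q.support, monomial s (coeff s Q) :=
    (support_sum_monomial_coeff Q).symm
  have hdecomp : ∀ N, hopfTerm T Q N
      = ∑ s ∈ Q.support, hopfTerm T (monomial s (coeff s Q)) N := by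
    intro N
    conv_lhs => rw [hQ]
    exact hopfTerm_sum T Q.support _ N
  have hsupp : Function.support (hopfTerm T Q) ⊆ ↑(Finset.Iic D) := by
    intro N hN
    simp only [Function.mem_support] at hN
    rw [hdecomp] at hN
    obtain ⟨s, hs, hne⟩ := Finset.exists_ne_zero_of_sum_ne_zero hN
    have hle : ∀ i, N i ≤ s i := by
      by_contra hcon
      exact hne (hopfTerm_monomial_zero T s (coeff s Q) N hcon)
    simp only [Finset.coe_Iic, Set.mem_Iic]
    intro i
    exact le_trans (hle i) (Finset.le_sup (f := fun s => s i) hs)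
  refine ⟨Set.Finite.subset (Finset.Iic D).finite_toSet hsupp, ?_⟩
  rw [finsum_eq_sum_of_support_subset _ hsupp]
  rw [Finset.sum_congr rfl fun N _ => hdecomp N, Finset.sum_comm]
  have hterm : ∀ s ∈ Q.support,
      (∑ N ∈ Finset.Iic D, hopfTerm T (monomial s (coeff s Q)) N)
      = T (monomial s (coeff s Q)) := by
    intro s hs
    exact sum_hopfTerm_monomial T s (coeff s Q) D
      (fun i => Finset.le_sup (f := fun s => s i) hs)
  rw [Finset.sum_congr rfl hterm, ← map_sum, ← hQ]

end
end

section
/- In one variable, the operator T on K[x] defined by T(x^i) = x^j and T(x^k) = 0 for k ≠ i is given by the locally finite series T = (x^j/i!) Σ_{ℓ≥0} (−1)^ℓ (x^ℓ/ℓ!) d^{i+ℓ}/dx^{i+ℓ}. -/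
set_option maxHeartbeats 1000000


noncomputable section

variable {K : Type*} [Field K] [CharZero K]

/-- The `ℓ`-th term of the series `(x^j/i!) Σ_ℓ (−1)^ℓ (x^ℓ/ℓ!) d^{i+ℓ}/dx^{i+ℓ}`
applied to `Q`. -/
def seriesTerm (i j : ℕ) (Q : Polynomial K) (ℓ : ℕ) : Polynomial K :=
  ((-1 : K) ^ ℓ / ((Nat.factorial i : K) * (Nat.factorial ℓ : K))) •
    (Polynomial.X ^ j * Polynomial.X ^ ℓ *
      (fun R : Polynomial K => Polynomial.derivative R)^[i + ℓ] Q)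

lemma seriesTerm_eq_zero (i j : ℕ) (Q : Polynomial K) {ℓ : ℕ} (h : Q.natDegree < ℓ) :
    seriesTerm i j Q ℓ = 0 := by
  have : (fun R : Polynomial K => Polynomial.derivative R)^[i + ℓ] Q = 0 := by
    show Polynomial.derivative^[i + ℓ] Q = 0
    exact Polynomial.iterate_derivative_eq_zero (lt_of_lt_of_le h (Nat.le_add_left _ _))
  simp [seriesTerm, this]

lemma seriesTerm_support_finite (i j : ℕ) (Q : Polynomial K) :
    (Function.support (seriesTerm i j Q)).Finite := by
  apply Set.Finite.subset (Set.finite_Iic Q.natDegree)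
  intro ℓ hℓ
  simp only [Function.mem_support] at hℓ
  by_contra h
  exact hℓ (seriesTerm_eq_zero i j Q (lt_of_not_ge h))

lemma seriesTerm_add (i j : ℕ) (P Q : Polynomial K) (ℓ : ℕ) :
    seriesTerm i j (P + Q) ℓ = seriesTerm i j P ℓ + seriesTerm i j Q ℓ := by
  unfold seriesTerm
  show _ • (_ * _ * Polynomial.derivative^[i+ℓ] (P + Q)) = _
  rw [iterate_map_add, mul_add, smul_add]

lemma seriesTerm_smul (i j : ℕ) (a : K) (Q : Polynomial K) (ℓ : ℕ) :
    seriesTerm i j (a • Q) ℓ = a • seriesTerm i j Q ℓ := by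
  unfold seriesTerm
  show _ • (_ * _ * Polynomial.derivative^[i+ℓ] (a • Q)) = _
  rw [Polynomial.iterate_derivative_smul, mul_smul_comm, smul_comm]

open Polynomial Finset in
lemma seriesTerm_X_pow (i j k ℓ : ℕ) :
    seriesTerm i j ((X : Polynomial K) ^ k) ℓ =
      ((-1 : K) ^ ℓ * (k.choose i) * ((k - i).choose ℓ)) •
        X ^ (j + ℓ + (k - (i + ℓ))) := by
  unfold seriesTerm
  show _ • (_ * _ * Polynomial.derivative^[i+ℓ] (X ^ k)) = _
  rw [Polynomial.iterate_derivative_X_pow_eq_smul, mul_smul_comm, smul_smul]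
  congr 1
  · have hnat : k.descFactorial (i + ℓ) =
        k.choose i * (k - i).choose ℓ * (i.factorial * ℓ.factorial) := by
      have h2 := Nat.descFactorial_mul_descFactorial (n := k) (k := i) (m := i + ℓ)
        (Nat.le_add_right i ℓ)
      rw [Nat.add_sub_cancel_left] at h2
      rw [← h2, Nat.descFactorial_eq_factorial_mul_choose,
        Nat.descFactorial_eq_factorial_mul_choose]
      ring
    have hcast : (k.descFactorial (i + ℓ) : K) =
        (k.choose i : K) * ((k - i).choose ℓ : K) * ((i.factorial : K) * (ℓ.factorial : K)) := by
      exact_mod_cast congrArg (Nat.cast (R := K)) hnat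
    rw [hcast]
    have hi : (i.factorial : K) ≠ 0 := Nat.cast_ne_zero.mpr i.factorial_ne_zero
    have hl : (ℓ.factorial : K) ≠ 0 := Nat.cast_ne_zero.mpr ℓ.factorial_ne_zero
    field_simp
  · rw [← pow_add, ← pow_add]

open Polynomial Finset in
lemma finsum_seriesTerm_X_pow (i j k : ℕ) :
    ∑ᶠ ℓ : ℕ, seriesTerm i j ((X : Polynomial K) ^ k) ℓ =
      if k = i then (X : Polynomial K) ^ j else 0 := by
  have hsupp : Function.support (seriesTerm i j ((X : Polynomial K) ^ k)) ⊆
      (Finset.range (k + 1) : Finset ℕ) := by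
    intro ℓ hℓ
    simp only [Function.mem_support] at hℓ
    simp only [Finset.coe_range, Set.mem_Iio]
    by_contra h
    exact hℓ (seriesTerm_eq_zero i j _ (by
      rw [natDegree_X_pow]; omega))
  rw [finsum_eq_finset_sum_of_support_subset _ hsupp]
  by_cases hki : k = i
  · subst hki
    rw [Finset.sum_eq_single 0]
    · simp [seriesTerm_X_pow]
    · intro ℓ _ hℓ0
      rw [seriesTerm_X_pow]
      simp [Nat.choose_eq_zero_of_lt (Nat.pos_of_ne_zero hℓ0)]
    · simp
  · rw [if_neg hki]
    by_cases hik : k < i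
    · apply Finset.sum_eq_zero
      intro ℓ _
      rw [seriesTerm_X_pow]
      simp [Nat.choose_eq_zero_of_lt hik]
    · -- i < k
      have hik' : i < k := by omega
      set n := k - i with hn
      have hn0 : n ≠ 0 := by omega
      have hsub : Finset.range (n + 1) ⊆ Finset.range (k + 1) := by
        apply Finset.range_subset_range.mpr; omega
      rw [← Finset.sum_subset hsub]
      · have hcongr : ∀ ℓ ∈ Finset.range (n + 1),
            seriesTerm i j ((X : Polynomial K) ^ k) ℓ =
              ((-1 : K) ^ ℓ * (k.choose i) * (n.choose ℓ)) • X ^ (j + n) := by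
          intro ℓ hℓ
          simp only [Finset.mem_range] at hℓ
          rw [seriesTerm_X_pow]
          congr 2
          omega
        rw [Finset.sum_congr rfl hcongr, ← Finset.sum_smul]
        have : ∑ ℓ ∈ Finset.range (n + 1), (-1 : K) ^ ℓ * (k.choose i) * (n.choose ℓ) = 0 := by
          have hz : ∑ ℓ ∈ Finset.range (n + 1), (-1 : ℤ) ^ ℓ * (n.choose ℓ) = 0 :=
            Int.alternating_sum_range_choose_of_ne hn0
          have : ∑ ℓ ∈ Finset.range (n + 1), (-1 : K) ^ ℓ * (k.choose i) * (n.choose ℓ) =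
              (k.choose i : K) * ((∑ ℓ ∈ Finset.range (n + 1),
                (-1 : ℤ) ^ ℓ * (n.choose ℓ) : ℤ) : K) := by
            push_cast
            rw [Finset.mul_sum]
            apply Finset.sum_congr rfl
            intro ℓ _
            ring
          rw [this, hz]
          simp
        rw [this, zero_smul]
      · intro ℓ _ hℓ
        simp only [Finset.mem_range, not_lt] at hℓ
        rw [seriesTerm_X_pow]
        have : n.choose ℓ = 0 := Nat.choose_eq_zero_of_lt (by omega)
        simp [this]
        exact Or.inr this

/-- The operator `T` on `K[x]` with `T(x^i) = x^j` and `T(x^k) = 0` for `k ≠ i` is the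
locally finite series `(x^j/i!) Σ_{ℓ≥0} (−1)^ℓ (x^ℓ/ℓ!) d^{i+ℓ}/dx^{i+ℓ}`. -/
theorem stmt16 (i j : ℕ) (T : Polynomial K →ₗ[K] Polynomial K)
    (hT : ∀ k : ℕ, T (Polynomial.X ^ k) = if k = i then Polynomial.X ^ j else 0)
    (Q : Polynomial K) :
    (Function.support (seriesTerm i j Q)).Finite ∧
    ∑ᶠ ℓ : ℕ, seriesTerm i j Q ℓ = T Q := by
  refine ⟨seriesTerm_support_finite i j Q, ?_⟩
  induction Q using Polynomial.induction_on' with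
  | add p q hp hq =>
    calc ∑ᶠ ℓ : ℕ, seriesTerm i j (p + q) ℓ
        = ∑ᶠ ℓ : ℕ, (seriesTerm i j p ℓ + seriesTerm i j q ℓ) := by
          simp only [seriesTerm_add]
      _ = (∑ᶠ ℓ : ℕ, seriesTerm i j p ℓ) + ∑ᶠ ℓ : ℕ, seriesTerm i j q ℓ :=
          finsum_add_distrib (seriesTerm_support_finite i j p)
            (seriesTerm_support_finite i j q)
      _ = T p + T q := by rw [hp, hq]
      _ = T (p + q) := (map_add T p q).symm
  | monomial n a =>
    rw [← Polynomial.smul_X_eq_monomial]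
    calc ∑ᶠ ℓ : ℕ, seriesTerm i j (a • Polynomial.X ^ n) ℓ
        = ∑ᶠ ℓ : ℕ, a • seriesTerm i j (Polynomial.X ^ n) ℓ := by
          simp only [seriesTerm_smul]
      _ = a • ∑ᶠ ℓ : ℕ, seriesTerm i j (Polynomial.X ^ n) ℓ :=
          (smul_finsum' a (seriesTerm_support_finite i j _)).symm
      _ = a • T (Polynomial.X ^ n) := by rw [finsum_seriesTerm_X_pow, hT]
      _ = T (a • Polynomial.X ^ n) := (map_smul T a _).symm

end
end
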